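/- arXiv:2204.02012 — 7 statements merged into one kernel-verified Lean document; each statement's English description precedes it below -/
import Mathlib

section
/- The double series \(\sum_{m=1}^\infty \sum_{n<m} m^{-s_1} n^{-s_2} (m+n)^{-s_3}\) converges absolutely whenever \(\Re(s_1)+\Re(s_3) > 1\) and \(\Re(s_1)+\Re(s_2)+\Re(s_3) > 2\). -/
/-!
For `1 ≤ n < m` we have `(m + n)^{-σ₃} ≪ m^{-σ₃}`, and for any `δ ≥ 0` also
`n^{-σ₂} ≤ m^δ n^{-σ₂-δ}`. Hence the term is dominated by a constant times
`m^{-(σ₁+σ₃-δ)} n^{-(σ₂+δ)}`, a product of two `p`-series. The hypotheses leave room for a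
`δ ≥ 0` with `σ₁ + σ₃ - δ > 1` and `σ₂ + δ > 1`.
-/

open Real

lemma exists_nonneg_shift_one_lt {a b : ℝ} (ha : 1 < a) (hab : 2 < a + b) :
    ∃ δ : ℝ, 0 ≤ δ ∧ 1 < a - δ ∧ 1 < b + δ := by
  refine ⟨(max 0 (1 - b) + (a - 1)) / 2, ?_, ?_, ?_⟩ <;>
    cases max_cases (0 : ℝ) (1 - b) <;> linarith

lemma summable_natCast_rpow_neg_mul_rpow_neg {p q : ℝ} (hp : 1 < p) (hq : 1 < q) :
    Summable (fun k : ℕ × ℕ => (k.1 : ℝ) ^ (-p) * (k.2 : ℝ) ^ (-q)) :=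
  (Real.summable_nat_rpow.mpr (by linarith)).mul_of_nonneg
    (Real.summable_nat_rpow.mpr (by linarith))
    (fun _ => by positivity) (fun _ => by positivity)

lemma rpow_neg_add_le {x y : ℝ} (hx : 0 < x) (hy : 0 ≤ y) (hyx : y ≤ x) (σ : ℝ) :
    (x + y) ^ (-σ) ≤ max 1 ((2 : ℝ) ^ (-σ)) * x ^ (-σ) := by
  rcases le_or_gt 0 σ with hσ | hσ
  · calc (x + y) ^ (-σ) ≤ x ^ (-σ) := rpow_le_rpow_of_nonpos hx (by linarith) (by linarith)
      _ ≤ max 1 ((2 : ℝ) ^ (-σ)) * x ^ (-σ) :=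
        le_mul_of_one_le_left (by positivity) (le_max_left _ _)
  · calc (x + y) ^ (-σ) ≤ (2 * x) ^ (-σ) := rpow_le_rpow (by linarith) (by linarith) (by linarith)
      _ = (2 : ℝ) ^ (-σ) * x ^ (-σ) := mul_rpow (by norm_num) hx.le
      _ ≤ max 1 ((2 : ℝ) ^ (-σ)) * x ^ (-σ) := by gcongr; exact le_max_right _ _

lemma rpow_neg_le_rpow_mul_rpow_neg {x y δ : ℝ} (hy : 0 < y) (hyx : y ≤ x) (hδ : 0 ≤ δ)
    (σ : ℝ) : y ^ (-σ) ≤ x ^ δ * y ^ (-(σ + δ)) :=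
  calc y ^ (-σ) = y ^ δ * y ^ (-(σ + δ)) := by rw [← rpow_add hy]; ring_nf
    _ ≤ x ^ δ * y ^ (-(σ + δ)) := by gcongr

lemma rpow_neg_mul_rpow_neg_mul_add_rpow_neg_le {x y δ : ℝ} (hy : 0 < y) (hyx : y ≤ x)
    (hδ : 0 ≤ δ) (σ₁ σ₂ σ₃ : ℝ) :
    x ^ (-σ₁) * y ^ (-σ₂) * (x + y) ^ (-σ₃) ≤
      max 1 ((2 : ℝ) ^ (-σ₃)) * (x ^ (-(σ₁ + σ₃ - δ)) * y ^ (-(σ₂ + δ))) := by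
  have hx : 0 < x := hy.trans_le hyx
  calc x ^ (-σ₁) * y ^ (-σ₂) * (x + y) ^ (-σ₃)
      ≤ x ^ (-σ₁) * (x ^ δ * y ^ (-(σ₂ + δ))) * (max 1 ((2 : ℝ) ^ (-σ₃)) * x ^ (-σ₃)) := by
        gcongr
        · exact rpow_neg_le_rpow_mul_rpow_neg hy hyx hδ σ₂
        · exact rpow_neg_add_le hx hy.le hyx σ₃
    _ = max 1 ((2 : ℝ) ^ (-σ₃)) * ((x ^ (-σ₁) * x ^ δ * x ^ (-σ₃)) * y ^ (-(σ₂ + δ))) := by ring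
    _ = max 1 ((2 : ℝ) ^ (-σ₃)) * (x ^ (-(σ₁ + σ₃ - δ)) * y ^ (-(σ₂ + δ))) := by
        rw [← rpow_add hx, ← rpow_add hx]; ring_nf

lemma norm_inv_ofReal_cpow_mul_cpow_mul_add_cpow {x y : ℝ} (hx : 0 < x) (hy : 0 < y)
    (s₁ s₂ s₃ : ℂ) :
    ‖((x : ℂ) ^ s₁ * (y : ℂ) ^ s₂ * ((x : ℂ) + (y : ℂ)) ^ s₃)⁻¹‖ =
      x ^ (-s₁.re) * y ^ (-s₂.re) * (x + y) ^ (-s₃.re) := by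
  rw [← Complex.ofReal_add, norm_inv, norm_mul, norm_mul,
    Complex.norm_cpow_eq_rpow_re_of_pos hx, Complex.norm_cpow_eq_rpow_re_of_pos hy,
    Complex.norm_cpow_eq_rpow_re_of_pos (add_pos hx hy),
    rpow_neg hx.le, rpow_neg hy.le, rpow_neg (add_pos hx hy).le, mul_inv, mul_inv]

/-- The Apostol-Vu double series converges absolutely when
`Re s₁ + Re s₃ > 1` and `Re s₁ + Re s₂ + Re s₃ > 2`. -/
theorem apostolVu_summable (s₁ s₂ s₃ : ℂ) (h13 : 1 < s₁.re + s₃.re)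
    (h123 : 2 < s₁.re + s₂.re + s₃.re) :
    Summable (fun p : ℕ × ℕ => if 1 ≤ p.2 ∧ p.2 < p.1 then
      ‖((p.1 : ℂ) ^ s₁ * (p.2 : ℂ) ^ s₂ * ((p.1 : ℂ) + (p.2 : ℂ)) ^ s₃)⁻¹‖ else 0) := by
  obtain ⟨δ, hδ, hp, hq⟩ := exists_nonneg_shift_one_lt h13 (by linarith : 2 < _ + s₂.re)
  refine Summable.of_nonneg_of_le (fun _ => by split_ifs <;> positivity) ?_
    ((summable_natCast_rpow_neg_mul_rpow_neg hp hq).mul_left (max 1 ((2 : ℝ) ^ (-s₃.re))))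
  rintro ⟨m, n⟩
  split_ifs with h
  · have hn : (0 : ℝ) < n := by exact_mod_cast h.1
    have hnm : (n : ℝ) ≤ m := by exact_mod_cast h.2.le
    have := norm_inv_ofReal_cpow_mul_cpow_mul_add_cpow (hn.trans_le hnm) hn s₁ s₂ s₃
    push_cast at this
    rw [this]
    exact rpow_neg_mul_rpow_neg_mul_add_rpow_neg_le hn hnm hδ _ _ _
  · positivity
end

section
/- The series \(\sum_{k=2}^\infty \left| \sum_{k/2 < m \le k-1} m^{-s_1} (k-m)^{-s_2} \right|^2 k^{-s_3}\) with real \(s_3\) converges absolutely whenever \(2\Re(s_1)+s_3 > 1\) and \(2\Re(s_1)+2\Re(s_2)+s_3 > 3\). -/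
/-!
For `k/2 < m < k` we have `|m^{-s₁}| ≍ k^{-Re s₁}`, so the inner sum is at most a constant times
`k^{-Re s₁} ∑_{j < k} j^{-Re s₂}`. The partial sums of `j^{-b}` grow at most like `k^c` for every
`c ≥ 0` with `b + c > 1`, since `j^{-b} ≤ k^c j^{-(b+c)}` for `j ≤ k`. Hence the `k`-th term is
`O(k^{2c - 2 Re s₁ - s₃})`, and the two hypotheses leave room for a `c > max (1 - Re s₂) 0` that
makes this exponent `< -1`.
-/

open Finset

lemma Real.rpow_neg_le_two_rpow_abs_mul {m k : ℝ} (a : ℝ) (hm : 0 < m) (hmk : m ≤ k)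
    (hkm : k ≤ 2 * m) : m ^ (-a) ≤ 2 ^ |a| * k ^ (-a) := by
  have hk : 0 < k := hm.trans_le hmk
  rcases le_total 0 a with ha | ha
  · calc m ^ (-a) ≤ (k / 2) ^ (-a) :=
          Real.rpow_le_rpow_of_nonpos (by positivity) (by linarith) (by linarith)
      _ = 2 ^ |a| * k ^ (-a) := by
          rw [Real.div_rpow hk.le zero_le_two, Real.rpow_neg zero_le_two, abs_of_nonneg ha]
          field_simp
  · calc m ^ (-a) ≤ 1 * k ^ (-a) := by
          rw [one_mul]; exact Real.rpow_le_rpow hm.le hmk (by linarith)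
      _ ≤ 2 ^ |a| * k ^ (-a) := by
          gcongr
          exact Real.one_le_rpow one_le_two (abs_nonneg a)

lemma sum_Icc_rpow_neg_le {b c : ℝ} (hc : 0 ≤ c) (hbc : 1 < b + c) (n : ℕ) :
    ∑ j ∈ Icc 1 n, (j : ℝ) ^ (-b) ≤ (n : ℝ) ^ c * ∑' j : ℕ, (j : ℝ) ^ (-(b + c)) := by
  calc ∑ j ∈ Icc 1 n, (j : ℝ) ^ (-b) = ∑ j ∈ Icc 1 n, (j : ℝ) ^ c * (j : ℝ) ^ (-(b + c)) := by
        refine sum_congr rfl fun j hj => ?_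
        have hj : (0 : ℝ) < j := by exact_mod_cast (mem_Icc.mp hj).1
        rw [← Real.rpow_add hj]; ring_nf
    _ ≤ ∑ j ∈ Icc 1 n, (n : ℝ) ^ c * (j : ℝ) ^ (-(b + c)) := by
        gcongr with j hj
        exact_mod_cast (mem_Icc.mp hj).2
    _ ≤ (n : ℝ) ^ c * ∑' j : ℕ, (j : ℝ) ^ (-(b + c)) := by
        rw [← mul_sum]
        gcongr
        exact (Real.summable_nat_rpow.mpr (by linarith)).sum_le_tsum _ fun j _ => by positivity

noncomputable def apostolVuInner (s₁ s₂ : ℂ) (k : ℕ) : ℂ :=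
  ∑ m ∈ (Icc 1 (k - 1)).filter (fun m => k < 2 * m), ((m : ℂ) ^ s₁ * ((k - m : ℕ) : ℂ) ^ s₂)⁻¹

lemma norm_apostolVuInner_le (s₁ s₂ : ℂ) {c : ℝ} (hc : 0 ≤ c) (hbc : 1 < s₂.re + c)
    {k : ℕ} (hk : 0 < k) :
    ‖apostolVuInner s₁ s₂ k‖ ≤
      2 ^ |s₁.re| * (∑' j : ℕ, (j : ℝ) ^ (-(s₂.re + c))) * (k : ℝ) ^ (c - s₁.re) := by
  set F := (Icc 1 (k - 1)).filter (fun m => k < 2 * m)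
  have hterm : ∀ m ∈ F, ‖((m : ℂ) ^ s₁ * ((k - m : ℕ) : ℂ) ^ s₂)⁻¹‖ ≤
      2 ^ |s₁.re| * (k : ℝ) ^ (-s₁.re) * ((k - m : ℕ) : ℝ) ^ (-s₂.re) := by
    intro m hm
    simp only [F, mem_filter, mem_Icc] at hm
    rw [norm_inv, norm_mul, Complex.norm_natCast_cpow_of_pos (by omega),
      Complex.norm_natCast_cpow_of_pos (by omega), mul_inv, ← Real.rpow_neg (by positivity),
      ← Real.rpow_neg (by positivity)]
    gcongr
    exact Real.rpow_neg_le_two_rpow_abs_mul _ (by exact_mod_cast hm.1.1)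
      (by exact_mod_cast (by omega : m ≤ k)) (by exact_mod_cast hm.2.le)
  have hreflect : ∑ m ∈ F, ((k - m : ℕ) : ℝ) ^ (-s₂.re) ≤ ∑ j ∈ Icc 1 k, (j : ℝ) ^ (-s₂.re) := by
    rw [← sum_image (f := fun j : ℕ => (j : ℝ) ^ (-s₂.re)) fun x hx y hy h => by
      simp only [F, coe_filter, mem_Icc, Set.mem_ofPred_eq] at hx hy h; omega]
    refine sum_le_sum_of_subset_of_nonneg (fun j => ?_) fun _ _ _ => by positivity
    simp only [F, mem_image, mem_filter, mem_Icc, forall_exists_index, and_imp]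
    omega
  calc ‖apostolVuInner s₁ s₂ k‖
      ≤ ∑ m ∈ F, ‖((m : ℂ) ^ s₁ * ((k - m : ℕ) : ℂ) ^ s₂)⁻¹‖ := norm_sum_le _ _
    _ ≤ ∑ m ∈ F, 2 ^ |s₁.re| * (k : ℝ) ^ (-s₁.re) * ((k - m : ℕ) : ℝ) ^ (-s₂.re) :=
        sum_le_sum hterm
    _ = 2 ^ |s₁.re| * (k : ℝ) ^ (-s₁.re) * ∑ m ∈ F, ((k - m : ℕ) : ℝ) ^ (-s₂.re) :=
        (mul_sum _ _ _).symm
    _ ≤ 2 ^ |s₁.re| * (k : ℝ) ^ (-s₁.re) *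
          ((k : ℝ) ^ c * ∑' j : ℕ, (j : ℝ) ^ (-(s₂.re + c))) := by
        gcongr
        exact hreflect.trans (sum_Icc_rpow_neg_le hc hbc k)
    _ = _ := by rw [sub_eq_neg_add, Real.rpow_add (by positivity)]; ring

/-- The series `ζ_{AV,2}^{[2]}(s₁,s₂,s₃)` with real `s₃` converges absolutely when
`2 Re s₁ + s₃ > 1` and `2 Re s₁ + 2 Re s₂ + s₃ > 3`. -/
theorem apostolVuSq_summable (s₁ s₂ : ℂ) (s₃ : ℝ) (h1 : 1 < 2 * s₁.re + s₃)
    (h2 : 3 < 2 * s₁.re + 2 * s₂.re + s₃) :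
    Summable (fun k : ℕ => if 2 ≤ k then
      ‖∑ m ∈ (Finset.Icc 1 (k - 1)).filter (fun m => k < 2 * m),
          ((m : ℂ) ^ s₁ * ((k - m : ℕ) : ℂ) ^ s₂)⁻¹‖ ^ 2 * ((k : ℝ) ^ s₃)⁻¹ else 0) := by
  obtain ⟨c, hc_gt, hc_lt⟩ : ∃ c, max (1 - s₂.re) 0 < c ∧ c < (2 * s₁.re + s₃ - 1) / 2 :=
    exists_between (max_lt (by linarith) (by linarith))
  obtain ⟨hbc, hc⟩ : 1 - s₂.re < c ∧ 0 < c := max_lt_iff.mp hc_gt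
  set A := 2 ^ |s₁.re| * ∑' j : ℕ, (j : ℝ) ^ (-(s₂.re + c))
  refine Summable.of_nonneg_of_le (fun k => by positivity) (fun k => ?_)
    ((Real.summable_nat_rpow.mpr (by linarith : 2 * (c - s₁.re) - s₃ < -1)).mul_left (A ^ 2))
  split_ifs with hk
  · have hk0 : (0 : ℝ) < k := by positivity
    calc ‖apostolVuInner s₁ s₂ k‖ ^ 2 * ((k : ℝ) ^ s₃)⁻¹
        ≤ (A * (k : ℝ) ^ (c - s₁.re)) ^ 2 * ((k : ℝ) ^ s₃)⁻¹ := by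
          gcongr; exact norm_apostolVuInner_le s₁ s₂ hc.le (by linarith) (by omega)
      _ = A ^ 2 * (k : ℝ) ^ (2 * (c - s₁.re) - s₃) := by
          rw [mul_pow, mul_assoc, ← Real.rpow_mul_natCast hk0.le, Real.rpow_sub hk0 _ s₃,
            div_eq_mul_inv, mul_comm (c - s₁.re)]
          norm_num
  · positivity
end

section
/- Let \(\sigma_1, \sigma_2, \sigma_3\) be real with \(\sigma_1 + \sigma_3 > 0\) and \(\sigma_1 + \sigma_2 + \sigma_3 > 1\). Then for every integer \(N \ge 1\), \(\sum_{n=N+1}^\infty n^{-\sigma_2} \int_n^\infty u^{-\sigma_1-1}(u+n)^{-\sigma_3}\,du \ll N^{1-\sigma_1-\sigma_2-\sigma_3}\) (if \(\sigma_1+\sigma_2+\sigma_3 > 1\)), with implicit constant depending only on \(\sigma_1, \sigma_2, \sigma_3\). -/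
open MeasureTheory


lemma tail_rpow_sum_le (s : ℝ) (hs : 1 < s) (N : ℕ) (hN : 1 ≤ N) :
    ∑' n : ℕ, (if N < n then (n : ℝ) ^ (-s) else 0) ≤ (s - 1)⁻¹ * (N : ℝ) ^ (1 - s) := by
  have hNpos : (0 : ℝ) < N := by exact_mod_cast hN
  have hint : IntegrableOn (fun x : ℝ => x ^ (-s)) (Set.Ioi (N : ℝ)) :=
    integrableOn_Ioi_rpow_of_lt (by linarith) hNpos
  have hIoi : (∫ x in Set.Ioi (N : ℝ), x ^ (-s)) = (s - 1)⁻¹ * (N : ℝ) ^ (1 - s) := by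
    rw [integral_Ioi_rpow_of_lt (by linarith) hNpos, show -s + 1 = 1 - s by ring]
    have h1 : (1 : ℝ) - s ≠ 0 := by linarith
    have h2 : s - 1 ≠ 0 := by linarith
    field_simp
    ring
  have hnonneg : ∀ n : ℕ, 0 ≤ (if N < n then (n : ℝ) ^ (-s) else 0) := by
    intro n; split
    · positivity
    · exact le_rfl
  have hsum : Summable (fun n : ℕ => if N < n then (n : ℝ) ^ (-s) else 0) :=
    Summable.of_nonneg_of_le hnonneg
      (fun n => by split; exacts [le_rfl, by positivity])
      (Real.summable_nat_rpow.mpr (by linarith))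
  rw [← hIoi]
  apply Summable.tsum_le_of_sum_le hsum
  intro F
  set K := max (F.sup id) N with hK
  have hNK : N ≤ K := le_max_right _ _
  calc ∑ n ∈ F, (if N < n then (n : ℝ) ^ (-s) else 0)
      ≤ ∑ n ∈ Finset.Ico (N+1) (K+1), (n : ℝ) ^ (-s) := by
        rw [← Finset.sum_filter]
        apply Finset.sum_le_sum_of_subset_of_nonneg
        · intro n hn
          simp only [Finset.mem_filter] at hn
          have : n ≤ F.sup id := Finset.le_sup (f := id) hn.1
          simp only [Finset.mem_Ico]
          omega
        · intro n _ _; positivity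
    _ = ∑ i ∈ Finset.Ico N K, ((i + 1 : ℕ) : ℝ) ^ (-s) := by
        rw [← Finset.sum_Ico_add (fun n : ℕ => (n : ℝ) ^ (-s)) N K 1]
        simp [add_comm]
    _ ≤ ∫ x in (N : ℝ)..(K : ℝ), x ^ (-s) := by
        refine AntitoneOn.sum_le_integral_Ico (f := fun x : ℝ => x ^ (-s)) hNK ?_
        intro x hx y hy hxy
        exact Real.rpow_le_rpow_of_nonpos (lt_of_lt_of_le hNpos hx.1) hxy (by linarith)
    _ ≤ ∫ x in Set.Ioi (N : ℝ), x ^ (-s) := by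
        rw [intervalIntegral.integral_of_le (by exact_mod_cast hNK)]
        apply setIntegral_mono_set hint
        · filter_upwards [self_mem_ae_restrict measurableSet_Ioi] with x hx
          exact Real.rpow_nonneg (hNpos.le.trans hx.le) _
        · exact Filter.Eventually.of_forall Set.Ioc_subset_Ioi_self

lemma inner_int_le (σ₁ σ₃ : ℝ) (h1 : 0 < σ₁ + σ₃) (n : ℕ) (hn : 1 ≤ n) :
    (∫ u in Set.Ioi (n : ℝ), u ^ (-σ₁ - 1) * (u + n) ^ (-σ₃)) ≤
      (max 1 (2 ^ (-σ₃)) / (σ₁ + σ₃)) * (n : ℝ) ^ (-(σ₁ + σ₃)) := by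
  have npos : (0 : ℝ) < n := by exact_mod_cast hn
  set c : ℝ := max 1 (2 ^ (-σ₃)) with hc
  have hc0 : (0 : ℝ) ≤ c := le_trans zero_le_one (le_max_left _ _)
  have hrint : IntegrableOn (fun u : ℝ => u ^ (-σ₁ - σ₃ - 1)) (Set.Ioi (n : ℝ)) :=
    integrableOn_Ioi_rpow_of_lt (by linarith) npos
  have hgint : IntegrableOn (fun u : ℝ => c * u ^ (-σ₁ - σ₃ - 1)) (Set.Ioi (n : ℝ)) :=
    hrint.const_mul c
  have key : (∫ u in Set.Ioi (n : ℝ), u ^ (-σ₁ - 1) * (u + n) ^ (-σ₃)) ≤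
      ∫ u in Set.Ioi (n : ℝ), c * u ^ (-σ₁ - σ₃ - 1) := by
    apply integral_mono_of_nonneg
    · filter_upwards [self_mem_ae_restrict measurableSet_Ioi] with u hu
      have hu0 : (0 : ℝ) < u := lt_trans npos hu
      exact mul_nonneg (Real.rpow_nonneg hu0.le _)
        (Real.rpow_nonneg (by linarith [Set.mem_Ioi.mp hu]) _)
    · exact hgint
    · filter_upwards [self_mem_ae_restrict measurableSet_Ioi] with u hu
      have hnu : (n : ℝ) < u := hu
      have hu0 : (0 : ℝ) < u := lt_trans npos hnu
      have hkey : (u + n) ^ (-σ₃) ≤ c * u ^ (-σ₃) := by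
        rcases le_or_gt 0 σ₃ with h | h
        · calc (u + n) ^ (-σ₃) ≤ u ^ (-σ₃) :=
                Real.rpow_le_rpow_of_nonpos hu0 (by linarith) (by linarith)
            _ ≤ c * u ^ (-σ₃) :=
                le_mul_of_one_le_left (Real.rpow_nonneg hu0.le _) (le_max_left _ _)
        · calc (u + n) ^ (-σ₃) ≤ (2 * u) ^ (-σ₃) :=
                Real.rpow_le_rpow (by linarith) (by linarith) (by linarith)
            _ = 2 ^ (-σ₃) * u ^ (-σ₃) := Real.mul_rpow (by norm_num) hu0.le
            _ ≤ c * u ^ (-σ₃) :=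
                mul_le_mul_of_nonneg_right (le_max_right _ _) (Real.rpow_nonneg hu0.le _)
      calc u ^ (-σ₁ - 1) * (u + n) ^ (-σ₃) ≤ u ^ (-σ₁ - 1) * (c * u ^ (-σ₃)) :=
            mul_le_mul_of_nonneg_left hkey (Real.rpow_nonneg hu0.le _)
        _ = c * u ^ (-σ₁ - σ₃ - 1) := by
            rw [show u ^ (-σ₁ - 1) * (c * u ^ (-σ₃)) = c * (u ^ (-σ₁ - 1) * u ^ (-σ₃)) by ring,
              ← Real.rpow_add hu0]
            ring_nf
  refine key.trans_eq ?_
  rw [integral_const_mul, integral_Ioi_rpow_of_lt (by linarith) npos,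
    show -σ₁ - σ₃ - 1 + 1 = -(σ₁ + σ₃) by ring, neg_div_neg_eq]
  ring

open scoped Classical in
/-- Tail estimate: for `σ₁+σ₃ > 0` and `σ₁+σ₂+σ₃ > 1`,
`∑_{n>N} n^{-σ₂} ∫_n^∞ u^{-σ₁-1}(u+n)^{-σ₃} du ≪ N^{1-σ₁-σ₂-σ₃}`. -/
theorem tail_sum_integral_bound (σ₁ σ₂ σ₃ : ℝ) (h1 : 0 < σ₁ + σ₃)
    (h2 : 1 < σ₁ + σ₂ + σ₃) :
    ∃ C > 0, ∀ N : ℕ, 1 ≤ N →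
      Summable (fun n : ℕ => if N < n then
        (n : ℝ) ^ (-σ₂) * ∫ u in Set.Ioi (n : ℝ), u ^ (-σ₁ - 1) * (u + n) ^ (-σ₃)
        else 0) ∧
      (∑' n : ℕ, if N < n then
        (n : ℝ) ^ (-σ₂) * ∫ u in Set.Ioi (n : ℝ), u ^ (-σ₁ - 1) * (u + n) ^ (-σ₃)
        else 0) ≤ C * (N : ℝ) ^ (1 - σ₁ - σ₂ - σ₃) := by
  set s : ℝ := σ₁ + σ₂ + σ₃ with hs
  set K : ℝ := max 1 (2 ^ (-σ₃)) / (σ₁ + σ₃) with hKdef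
  have hK0 : 0 < K := div_pos (lt_of_lt_of_le one_pos (le_max_left _ _)) h1
  refine ⟨K * (s - 1)⁻¹, mul_pos hK0 (inv_pos.mpr (by linarith)), fun N hN => ?_⟩
  set a : ℕ → ℝ := fun n => if N < n then
      (n : ℝ) ^ (-σ₂) * ∫ u in Set.Ioi (n : ℝ), u ^ (-σ₁ - 1) * (u + n) ^ (-σ₃) else 0
    with ha
  set b : ℕ → ℝ := fun n => if N < n then (n : ℝ) ^ (-s) else 0 with hb
  have hab : ∀ n, a n ≤ K * b n := by
    intro n
    simp only [ha, hb]
    split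
    · rename_i hNn
      have hn1 : 1 ≤ n := le_trans hN hNn.le
      have npos : (0 : ℝ) < n := by exact_mod_cast hn1
      calc (n : ℝ) ^ (-σ₂) * ∫ u in Set.Ioi (n : ℝ), u ^ (-σ₁ - 1) * (u + n) ^ (-σ₃)
          ≤ (n : ℝ) ^ (-σ₂) * (K * (n : ℝ) ^ (-(σ₁ + σ₃))) :=
            mul_le_mul_of_nonneg_left (inner_int_le σ₁ σ₃ h1 n hn1) (Real.rpow_nonneg npos.le _)
        _ = K * (n : ℝ) ^ (-s) := by
            rw [show (n:ℝ) ^ (-σ₂) * (K * (n : ℝ) ^ (-(σ₁ + σ₃)))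
                = K * ((n:ℝ) ^ (-σ₂) * (n : ℝ) ^ (-(σ₁ + σ₃))) by ring,
              ← Real.rpow_add npos, show -σ₂ + -(σ₁ + σ₃) = -s by rw [hs]; ring]
    · simp
  have ha_nonneg : ∀ n, 0 ≤ a n := by
    intro n
    simp only [ha]
    split
    · rename_i hNn
      have npos : (0 : ℝ) < n := by exact_mod_cast lt_of_le_of_lt (Nat.zero_le N) hNn
      refine mul_nonneg (Real.rpow_nonneg npos.le _) (setIntegral_nonneg measurableSet_Ioi ?_)
      intro u hu
      have hu0 : (0 : ℝ) < u := lt_trans npos hu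
      exact mul_nonneg (Real.rpow_nonneg hu0.le _)
        (Real.rpow_nonneg (by linarith [Set.mem_Ioi.mp hu]) _)
    · exact le_rfl
  have hb_nonneg : ∀ n, 0 ≤ b n := by
    intro n; simp only [hb]; split
    · positivity
    · exact le_rfl
  have hbsum : Summable b :=
    Summable.of_nonneg_of_le hb_nonneg
      (fun n => by simp only [hb]; split; exacts [le_rfl, by positivity])
      (Real.summable_nat_rpow.mpr (by linarith))
  have hasum : Summable a :=
    Summable.of_nonneg_of_le ha_nonneg hab (hbsum.mul_left K)
  refine ⟨hasum, ?_⟩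
  calc ∑' n, a n ≤ ∑' n, K * b n := Summable.tsum_le_tsum hab hasum (hbsum.mul_left K)
    _ = K * ∑' n, b n := tsum_mul_left
    _ ≤ K * ((s - 1)⁻¹ * (N : ℝ) ^ (1 - s)) :=
        mul_le_mul_of_nonneg_left (tail_rpow_sum_le s h2 N hN) hK0.le
    _ = K * (s - 1)⁻¹ * (N : ℝ) ^ (1 - σ₁ - σ₂ - σ₃) := by
        rw [show 1 - σ₁ - σ₂ - σ₃ = 1 - s by rw [hs]; ring]; ring
end

section
/- Let \(\sigma_2 \in \mathbb{R}\) and \(\sigma_1+\sigma_3 > 0\). For \(y \ge x \ge 1\) real, \(y^{-\sigma_1} \sum_{n \le x} n^{-\sigma_2}(y+n)^{-\sigma_3} \ll x^{-\sigma_1-\sigma_3}\) if \(\sigma_2 > 1\); \(\ll x^{-\sigma_1-\sigma_3} \log(2x)\) if \(\sigma_2 = 1\); \(\ll x^{1-\sigma_1-\sigma_2-\sigma_3}\) if \(\sigma_2 < 1\); with implicit constants depending only on \(\sigma_1, \sigma_2, \sigma_3\). -/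
open Finset

lemma sum_rpow_neg_le (s : ℝ) (hs : 0 < s) (N : ℕ) (hN : 1 ≤ N) :
    ∑ n ∈ Finset.Icc 1 N, (n:ℝ)^(-s) ≤ 1 + ∫ t in (1:ℝ)..(N:ℝ), t^(-s) := by
  have hanti : AntitoneOn (fun t : ℝ => t ^ (-s)) (Set.Icc ((1:ℕ):ℝ) ((N:ℕ):ℝ)) := by
    intro u hu v hv huv
    exact Real.rpow_le_rpow_of_nonpos (lt_of_lt_of_le one_pos (by exact_mod_cast hu.1)) huv
      (neg_nonpos.mpr hs.le)
  have hint := AntitoneOn.sum_le_integral_Ico hN hanti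
  have hre : ∑ i ∈ Finset.Ico 1 N, (((i+1:ℕ):ℝ))^(-s)
      = ∑ n ∈ Finset.Ico 2 (N+1), (n:ℝ)^(-s) :=
    Finset.sum_Ico_add' (fun i : ℕ => (i:ℝ)^(-s)) 1 N 1
  rw [hre] at hint
  rw [← Finset.Ico_add_one_right_eq_Icc, Finset.sum_eq_sum_Ico_succ_bot (by omega)]
  push_cast at hint ⊢
  rw [Real.one_rpow]
  linarith

lemma zero_notin (N : ℕ) (hN : 1 ≤ N) : (0:ℝ) ∉ Set.uIcc (1:ℝ) (N:ℝ) := by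
  rw [Set.uIcc_of_le (by exact_mod_cast hN)]
  intro h
  exact absurd h.1 (by norm_num)

lemma integral_eval (s : ℝ) (hs : s ≠ 1) (N : ℕ) (hN : 1 ≤ N) :
    ∫ t in (1:ℝ)..(N:ℝ), t^(-s) = ((N:ℝ)^(1-s) - 1) / (1-s) := by
  rw [integral_rpow (Or.inr ⟨fun h => hs (neg_injective h), zero_notin N hN⟩)]
  rw [Real.one_rpow, show -s + 1 = 1 - s from by ring]

lemma integral_eval_one (N : ℕ) (hN : 1 ≤ N) :
    ∫ t in (1:ℝ)..(N:ℝ), t^(-(1:ℝ)) = Real.log N := by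
  simp only [Real.rpow_neg_one]
  rw [integral_inv (zero_notin N hN)]
  simp

lemma kernel_bound (σ₁ σ₃ : ℝ) (h : 0 < σ₁ + σ₃) (x y : ℝ) (hx : 1 ≤ x) (hxy : x ≤ y)
    (t : ℝ) (ht0 : 0 ≤ t) (htx : t ≤ x) :
    y ^ (-σ₁) * (y + t) ^ (-σ₃) ≤ max 1 (2 ^ (-σ₃)) * x ^ (-σ₁ - σ₃) := by
  have hx0 : (0:ℝ) < x := lt_of_lt_of_le one_pos hx
  have hy : (0:ℝ) < y := lt_of_lt_of_le hx0 hxy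
  have hyt : (0:ℝ) < y + t := by linarith
  have hY : y ^ (-σ₁) * y ^ (-σ₃) = y ^ (-σ₁ - σ₃) := by
    rw [← Real.rpow_add hy]; ring_nf
  have hyx : y ^ (-σ₁ - σ₃) ≤ x ^ (-σ₁ - σ₃) :=
    Real.rpow_le_rpow_of_nonpos hx0 hxy (by linarith)
  rcases le_or_gt 0 σ₃ with h3 | h3
  · have h1 : (y + t) ^ (-σ₃) ≤ y ^ (-σ₃) :=
      Real.rpow_le_rpow_of_nonpos hy (by linarith) (neg_nonpos.mpr h3)
    calc y ^ (-σ₁) * (y + t) ^ (-σ₃) ≤ y ^ (-σ₁) * y ^ (-σ₃) :=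
          mul_le_mul_of_nonneg_left h1 (Real.rpow_nonneg hy.le _)
      _ = y ^ (-σ₁ - σ₃) := hY
      _ ≤ x ^ (-σ₁ - σ₃) := hyx
      _ ≤ max 1 (2 ^ (-σ₃)) * x ^ (-σ₁ - σ₃) :=
          le_mul_of_one_le_left (Real.rpow_nonneg hx0.le _) (le_max_left _ _)
  · have hexp : (0:ℝ) ≤ -σ₃ := by linarith
    have h1 : (y + t) ^ (-σ₃) ≤ (2*y) ^ (-σ₃) :=
      Real.rpow_le_rpow hyt.le (by linarith) hexp
    have h2 : (2*y) ^ (-σ₃) = 2 ^ (-σ₃) * y ^ (-σ₃) :=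
      Real.mul_rpow (by norm_num) hy.le
    calc y ^ (-σ₁) * (y + t) ^ (-σ₃) ≤ y ^ (-σ₁) * (2 ^ (-σ₃) * y ^ (-σ₃)) := by
          rw [← h2]; exact mul_le_mul_of_nonneg_left h1 (Real.rpow_nonneg hy.le _)
      _ = 2 ^ (-σ₃) * (y ^ (-σ₁) * y ^ (-σ₃)) := by ring
      _ = 2 ^ (-σ₃) * y ^ (-σ₁ - σ₃) := by rw [hY]
      _ ≤ 2 ^ (-σ₃) * x ^ (-σ₁ - σ₃) :=
          mul_le_mul_of_nonneg_left hyx (Real.rpow_nonneg (by norm_num) _)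
      _ ≤ max 1 (2 ^ (-σ₃)) * x ^ (-σ₁ - σ₃) :=
          mul_le_mul_of_nonneg_right (le_max_right _ _) (Real.rpow_nonneg hx0.le _)

lemma sum_reduction (σ₁ σ₂ σ₃ : ℝ) (h : 0 < σ₁ + σ₃) (x y : ℝ) (hx : 1 ≤ x) (hxy : x ≤ y) :
    y ^ (-σ₁) * ∑ n ∈ Finset.Icc 1 ⌊x⌋₊, (n : ℝ) ^ (-σ₂) * (y + n) ^ (-σ₃)
      ≤ max 1 (2 ^ (-σ₃)) * x ^ (-σ₁ - σ₃) * ∑ n ∈ Finset.Icc 1 ⌊x⌋₊, (n : ℝ) ^ (-σ₂) := by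
  rw [Finset.mul_sum, Finset.mul_sum]
  apply Finset.sum_le_sum
  intro n hn
  have hn' := Finset.mem_Icc.mp hn
  have htx : (n:ℝ) ≤ x :=
    le_trans (by exact_mod_cast hn'.2) (Nat.floor_le (by linarith))
  calc y ^ (-σ₁) * ((n:ℝ) ^ (-σ₂) * (y + n) ^ (-σ₃))
      = (y ^ (-σ₁) * (y + n) ^ (-σ₃)) * (n:ℝ) ^ (-σ₂) := by ring
    _ ≤ (max 1 (2 ^ (-σ₃)) * x ^ (-σ₁ - σ₃)) * (n:ℝ) ^ (-σ₂) :=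
        mul_le_mul_of_nonneg_right
          (kernel_bound σ₁ σ₃ h x y hx hxy n (Nat.cast_nonneg n) htx)
          (Real.rpow_nonneg (Nat.cast_nonneg n) _)
    _ = max 1 (2 ^ (-σ₃)) * x ^ (-σ₁ - σ₃) * (n:ℝ) ^ (-σ₂) := by ring

lemma sum_bound_gt (s : ℝ) (hs : 1 < s) (N : ℕ) (hN : 1 ≤ N) :
    ∑ n ∈ Finset.Icc 1 N, (n:ℝ)^(-s) ≤ 1 + 1/(s-1) := by
  have h0 := sum_rpow_neg_le s (by linarith) N hN
  rw [integral_eval s (by linarith) N hN] at h0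
  have ht : (0:ℝ) ≤ (N:ℝ)^(1-s) := Real.rpow_nonneg (Nat.cast_nonneg N) _
  have h1 : (1:ℝ) - s ≠ 0 := by intro hc; rw [sub_eq_zero] at hc; linarith
  have h2 : (0:ℝ) < s - 1 := by linarith
  have key : ((N:ℝ)^(1-s) - 1)/(1-s) = (1 - (N:ℝ)^(1-s))/(s-1) := by
    field_simp
    ring
  rw [key] at h0
  have : (1 - (N:ℝ)^(1-s))/(s-1) ≤ 1/(s-1) := by gcongr; linarith
  linarith

lemma sum_bound_eq (x : ℝ) (hx : 1 ≤ x) (hN : 1 ≤ ⌊x⌋₊) :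
    ∑ n ∈ Finset.Icc 1 ⌊x⌋₊, (n:ℝ)^(-(1:ℝ)) ≤ 1 + Real.log x := by
  have h0 := sum_rpow_neg_le 1 one_pos ⌊x⌋₊ hN
  rw [integral_eval_one ⌊x⌋₊ hN] at h0
  have hNx : ((⌊x⌋₊:ℕ):ℝ) ≤ x := Nat.floor_le (by linarith)
  have : Real.log ⌊x⌋₊ ≤ Real.log x :=
    Real.log_le_log (by exact_mod_cast hN) hNx
  linarith

lemma sum_bound_lt (s : ℝ) (hs : s < 1) (x : ℝ) (hx : 1 ≤ x) (hN : 1 ≤ ⌊x⌋₊) :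
    ∑ n ∈ Finset.Icc 1 ⌊x⌋₊, (n:ℝ)^(-s) ≤ (1 + 1/(1-s)) * x^(1-s) := by
  have hx0 : (0:ℝ) < x := lt_of_lt_of_le one_pos hx
  have hNx : ((⌊x⌋₊:ℕ):ℝ) ≤ x := Nat.floor_le hx0.le
  have h1s : (0:ℝ) < 1 - s := by linarith
  have hx1 : (1:ℝ) ≤ x^(1-s) := by
    have := Real.rpow_le_rpow zero_le_one hx h1s.le
    rwa [Real.one_rpow] at this
  have hfrac : (0:ℝ) < 1/(1-s) := by positivity
  rcases le_or_gt s 0 with h0 | h0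
  · have hb : ∀ n ∈ Finset.Icc 1 ⌊x⌋₊, (n:ℝ)^(-s) ≤ x^(-s) := by
      intro n hn
      have hn' := Finset.mem_Icc.mp hn
      have : (n:ℝ) ≤ x := le_trans (by exact_mod_cast hn'.2) hNx
      exact Real.rpow_le_rpow (Nat.cast_nonneg n) this (by linarith)
    have hsum := Finset.sum_le_card_nsmul _ _ _ hb
    rw [Nat.card_Icc] at hsum
    simp only [Nat.add_sub_cancel, nsmul_eq_mul] at hsum
    have hmul : ((⌊x⌋₊:ℕ):ℝ) * x^(-s) ≤ x * x^(-s) :=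
      mul_le_mul_of_nonneg_right hNx (Real.rpow_nonneg hx0.le _)
    have hxx : x * x^(-s) = x^(1-s) := by
      rw [show (1:ℝ)-s = 1 + (-s) from by ring, Real.rpow_add hx0, Real.rpow_one]
    nlinarith [Real.rpow_nonneg hx0.le (1-s)]
  · have h0' := sum_rpow_neg_le s h0 ⌊x⌋₊ hN
    rw [integral_eval s (ne_of_lt hs) ⌊x⌋₊ hN] at h0'
    have hNp : ((⌊x⌋₊:ℕ):ℝ)^(1-s) ≤ x^(1-s) :=
      Real.rpow_le_rpow (Nat.cast_nonneg _) hNx h1s.le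
    have hdiv : (((⌊x⌋₊:ℕ):ℝ)^(1-s) - 1)/(1-s) ≤ x^(1-s)/(1-s) := by
      gcongr
      linarith
    have : x^(1-s) + x^(1-s)/(1-s) = (1 + 1/(1-s)) * x^(1-s) := by ring
    linarith

/-- For `σ₁+σ₃ > 0` and `y ≥ x ≥ 1`:
`y^{-σ₁} ∑_{n ≤ x} n^{-σ₂}(y+n)^{-σ₃}` is `≪ x^{-σ₁-σ₃}` if `σ₂ > 1`,
`≪ x^{-σ₁-σ₃} log(2x)` if `σ₂ = 1`, and `≪ x^{1-σ₁-σ₂-σ₃}` if `σ₂ < 1`. -/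
theorem weighted_sum_bound (σ₁ σ₂ σ₃ : ℝ) (h : 0 < σ₁ + σ₃) :
    (1 < σ₂ → ∃ C > 0, ∀ x y : ℝ, 1 ≤ x → x ≤ y →
      y ^ (-σ₁) * ∑ n ∈ Finset.Icc 1 ⌊x⌋₊, (n : ℝ) ^ (-σ₂) * (y + n) ^ (-σ₃)
        ≤ C * x ^ (-σ₁ - σ₃)) ∧
    (σ₂ = 1 → ∃ C > 0, ∀ x y : ℝ, 1 ≤ x → x ≤ y →
      y ^ (-σ₁) * ∑ n ∈ Finset.Icc 1 ⌊x⌋₊, (n : ℝ) ^ (-σ₂) * (y + n) ^ (-σ₃)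
        ≤ C * x ^ (-σ₁ - σ₃) * Real.log (2 * x)) ∧
    (σ₂ < 1 → ∃ C > 0, ∀ x y : ℝ, 1 ≤ x → x ≤ y →
      y ^ (-σ₁) * ∑ n ∈ Finset.Icc 1 ⌊x⌋₊, (n : ℝ) ^ (-σ₂) * (y + n) ^ (-σ₃)
        ≤ C * x ^ (1 - σ₁ - σ₂ - σ₃)) := by
  set K : ℝ := max 1 (2 ^ (-σ₃)) with hKdef
  have hK : (0:ℝ) < K := lt_of_lt_of_le one_pos (le_max_left _ _)
  refine ⟨?_, ?_, ?_⟩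
  · intro h2
    have h21 : (0:ℝ) < σ₂ - 1 := by linarith
    have hC2 : (0:ℝ) < 1 + 1/(σ₂-1) := by
      have := one_div_pos.mpr h21; linarith
    refine ⟨K * (1 + 1/(σ₂-1)), mul_pos hK hC2, fun x y hx hxy => ?_⟩
    have hx0 : (0:ℝ) < x := lt_of_lt_of_le one_pos hx
    have hN : 1 ≤ ⌊x⌋₊ := Nat.le_floor (by exact_mod_cast hx)
    calc y ^ (-σ₁) * ∑ n ∈ Finset.Icc 1 ⌊x⌋₊, (n : ℝ) ^ (-σ₂) * (y + n) ^ (-σ₃)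
        ≤ K * x ^ (-σ₁ - σ₃) * ∑ n ∈ Finset.Icc 1 ⌊x⌋₊, (n : ℝ) ^ (-σ₂) :=
          sum_reduction σ₁ σ₂ σ₃ h x y hx hxy
      _ ≤ K * x ^ (-σ₁ - σ₃) * (1 + 1/(σ₂-1)) :=
          mul_le_mul_of_nonneg_left (sum_bound_gt σ₂ h2 ⌊x⌋₊ hN)
            (by positivity)
      _ = K * (1 + 1/(σ₂-1)) * x ^ (-σ₁ - σ₃) := by ring
  · intro h2
    subst h2
    have hl2 : (0:ℝ) < Real.log 2 := Real.log_pos (by norm_num)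
    have hC2 : (0:ℝ) < 1/Real.log 2 + 1 := by positivity
    refine ⟨K * (1/Real.log 2 + 1), mul_pos hK hC2, fun x y hx hxy => ?_⟩
    have hx0 : (0:ℝ) < x := lt_of_lt_of_le one_pos hx
    have hN : 1 ≤ ⌊x⌋₊ := Nat.le_floor (by exact_mod_cast hx)
    have hlx : (0:ℝ) ≤ Real.log x := Real.log_nonneg hx
    have hlog2x : Real.log (2*x) = Real.log 2 + Real.log x :=
      Real.log_mul (by norm_num) (ne_of_gt hx0)
    have hexp : (1/Real.log 2 + 1) * (Real.log 2 + Real.log x)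
        = 1 + Real.log x/Real.log 2 + Real.log 2 + Real.log x := by
      field_simp
      ring
    have hdivnn : (0:ℝ) ≤ Real.log x / Real.log 2 := div_nonneg hlx hl2.le
    have hstep : (1:ℝ) + Real.log x ≤ (1/Real.log 2 + 1) * Real.log (2*x) := by
      rw [hlog2x, hexp]; linarith
    calc y ^ (-σ₁) * ∑ n ∈ Finset.Icc 1 ⌊x⌋₊, (n : ℝ) ^ (-(1:ℝ)) * (y + n) ^ (-σ₃)
        ≤ K * x ^ (-σ₁ - σ₃) * ∑ n ∈ Finset.Icc 1 ⌊x⌋₊, (n : ℝ) ^ (-(1:ℝ)) :=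
          sum_reduction σ₁ 1 σ₃ h x y hx hxy
      _ ≤ K * x ^ (-σ₁ - σ₃) * ((1/Real.log 2 + 1) * Real.log (2*x)) :=
          mul_le_mul_of_nonneg_left (le_trans (sum_bound_eq x hx hN) hstep)
            (by positivity)
      _ = K * (1/Real.log 2 + 1) * x ^ (-σ₁ - σ₃) * Real.log (2*x) := by ring
  · intro h2
    have h1s : (0:ℝ) < 1 - σ₂ := by linarith
    have hC2 : (0:ℝ) < 1 + 1/(1-σ₂) := by positivity
    refine ⟨K * (1 + 1/(1-σ₂)), mul_pos hK hC2, fun x y hx hxy => ?_⟩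
    have hx0 : (0:ℝ) < x := lt_of_lt_of_le one_pos hx
    have hN : 1 ≤ ⌊x⌋₊ := Nat.le_floor (by exact_mod_cast hx)
    have hpow : x^(-σ₁-σ₃) * x^(1-σ₂) = x^(1-σ₁-σ₂-σ₃) := by
      rw [← Real.rpow_add hx0]; ring_nf
    calc y ^ (-σ₁) * ∑ n ∈ Finset.Icc 1 ⌊x⌋₊, (n : ℝ) ^ (-σ₂) * (y + n) ^ (-σ₃)
        ≤ K * x ^ (-σ₁ - σ₃) * ∑ n ∈ Finset.Icc 1 ⌊x⌋₊, (n : ℝ) ^ (-σ₂) :=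
          sum_reduction σ₁ σ₂ σ₃ h x y hx hxy
      _ ≤ K * x ^ (-σ₁ - σ₃) * ((1 + 1/(1-σ₂)) * x^(1-σ₂)) :=
          mul_le_mul_of_nonneg_left (sum_bound_lt σ₂ h2 x hx hN) (by positivity)
      _ = K * (1 + 1/(1-σ₂)) * (x^(-σ₁-σ₃) * x^(1-σ₂)) := by ring
      _ = K * (1 + 1/(1-σ₂)) * x^(1-σ₁-σ₂-σ₃) := by rw [hpow]
end

section
/- Let real numbers \(\sigma_1 \ge 0\), \(\sigma_3 > 0\) satisfy \(\frac{1}{2} < \sigma_1 + \sigma_3 \le 1\), and let \(\sigma_2 > 1\). Then for \(T \ge 2\), \(\sum_{m_1 > T} \sum_{n_1 < m_1} \sum_{n_2 < (m_1+n_1)/2} \frac{1}{m_1^{\sigma_1}(m_1+n_1-n_2)^{\sigma_1} n_1^{\sigma_2} n_2^{\sigma_2} (m_1+n_1)^{2\sigma_3}} \ll T^{1-2\sigma_1-2\sigma_3}\), with implicit constant depending only on \(\sigma_1,\sigma_2,\sigma_3\). -/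
set_option maxHeartbeats 1000000

open Real

private lemma key_rpow_ineq {r : ℝ} (hr0 : 0 < r) (hr1 : r ≤ 1) {x : ℝ} (hx : 2 ≤ x) :
    r * x ^ (-(r+1)) ≤ (x - 1) ^ (-r) - x ^ (-r) := by
  have hx0 : (0:ℝ) < x := by linarith
  have hx1 : (0:ℝ) < x - 1 := by linarith
  have hrx : r/x ≤ 1/2 := by
    rw [div_le_div_iff₀ hx0 (by norm_num)]; nlinarith
  have hrxpos : (0:ℝ) < 1 - r/x := by linarith
  have hb : (1 - 1/x) ^ r ≤ 1 - r/x := by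
    have hinvx : 1/x ≤ 1/2 := by
      rw [div_le_div_iff₀ hx0 (by norm_num)]; linarith
    have h := rpow_one_add_le_one_add_mul_self (s := -(1/x)) (by linarith) hr0.le hr1
    have e1 : 1 + -(1/x) = 1 - 1/x := by ring
    have e2 : 1 + r * -(1/x) = 1 - r/x := by ring
    rwa [e1, e2] at h
  have h2 : (x-1)^r ≤ x^r * (1 - r/x) := by
    have hxx : x - 1 = x * (1 - 1/x) := by field_simp
    rw [hxx, Real.mul_rpow hx0.le (by nlinarith)]
    exact mul_le_mul_of_nonneg_left hb (Real.rpow_nonneg hx0.le r)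
  have h3 : (x^r * (1 - r/x))⁻¹ ≤ (x-1)^(-r) := by
    rw [Real.rpow_neg hx1.le]
    exact inv_anti₀ (Real.rpow_pos_of_pos hx1 r) h2
  have h4 : x^(-r) * (1 + r/x) ≤ (x^r * (1 - r/x))⁻¹ := by
    rw [mul_inv, ← Real.rpow_neg hx0.le]
    refine mul_le_mul_of_nonneg_left ?_ (Real.rpow_nonneg hx0.le _)
    rw [inv_eq_one_div, le_div_iff₀ hrxpos]
    have : 0 ≤ r/x := by positivity
    nlinarith
  have hxr : x ^ (-(r+1)) = x^(-r) * x⁻¹ := by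
    rw [show -(r+1) = -r + (-1) by ring, Real.rpow_add hx0, Real.rpow_neg_one]
  have h5 : x^(-r) * (1 + r/x) = x^(-r) + r * x^(-(r+1)) := by
    rw [hxr]; field_simp
  have h6 := h4.trans h3
  rw [h5] at h6
  linarith

private lemma tel_sum (g : ℕ → ℝ) (M : ℕ) : ∀ N, M ≤ N →
    ∑ m ∈ Finset.Icc M N, (g (m-1) - g m) = g (M-1) - g N := by
  intro N
  induction N with
  | zero => intro h; interval_cases M; simp
  | succ N ih =>
    intro h
    rcases Nat.lt_or_ge N M with hNM | hNM
    · have : M = N + 1 := by omega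
      subst this; simp
    · rw [Finset.sum_Icc_succ_top (by omega), ih hNM, Nat.add_sub_cancel]
      ring

open scoped Classical in
/-- Tail estimate for the off-diagonal triple sum: for `σ₁ ≥ 0`, `σ₃ > 0`,
`1/2 < σ₁+σ₃ ≤ 1`, `σ₂ > 1`, the sum over `m₁ > T`, `n₁ < m₁`,
`n₂ < (m₁+n₁)/2` is `≪ T^{1-2σ₁-2σ₃}`. -/
theorem triple_tail_sum_bound (σ₁ σ₂ σ₃ : ℝ) (h1 : 0 ≤ σ₁) (h3 : 0 < σ₃)
    (h13 : 1 / 2 < σ₁ + σ₃) (h13' : σ₁ + σ₃ ≤ 1) (h2 : 1 < σ₂) :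
    ∃ C > 0, ∀ T : ℝ, 2 ≤ T →
      Summable (fun p : ℕ × ℕ × ℕ =>
        if T < (p.1 : ℝ) ∧ 1 ≤ p.2.1 ∧ p.2.1 < p.1 ∧ 1 ≤ p.2.2 ∧
            2 * p.2.2 < p.1 + p.2.1 then
          ((p.1 : ℝ) ^ σ₁ * ((p.1 + p.2.1 - p.2.2 : ℕ) : ℝ) ^ σ₁ *
            (p.2.1 : ℝ) ^ σ₂ * (p.2.2 : ℝ) ^ σ₂ *
            ((p.1 + p.2.1 : ℕ) : ℝ) ^ (2 * σ₃))⁻¹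
        else 0) ∧
      (∑' p : ℕ × ℕ × ℕ,
        if T < (p.1 : ℝ) ∧ 1 ≤ p.2.1 ∧ p.2.1 < p.1 ∧ 1 ≤ p.2.2 ∧
            2 * p.2.2 < p.1 + p.2.1 then
          ((p.1 : ℝ) ^ σ₁ * ((p.1 + p.2.1 - p.2.2 : ℕ) : ℝ) ^ σ₁ *
            (p.2.1 : ℝ) ^ σ₂ * (p.2.2 : ℝ) ^ σ₂ *
            ((p.1 + p.2.1 : ℕ) : ℝ) ^ (2 * σ₃))⁻¹
        else 0) ≤ C * T ^ (1 - 2 * σ₁ - 2 * σ₃) := by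
  set s : ℝ := 2*σ₁ + 2*σ₃ with hs_def
  have hs1 : 1 < s := by rw [hs_def]; linarith
  set r : ℝ := s - 1 with hr_def
  have hr0 : 0 < r := by rw [hr_def]; linarith
  have hr1 : r ≤ 1 := by rw [hr_def, hs_def]; linarith
  set G : ℕ → ℝ := fun n => if 1 ≤ n then (n:ℝ)^(-σ₂) else 0 with hG_def
  have hGnonneg : ∀ n, 0 ≤ G n := by
    intro n; simp only [hG_def]; split
    · positivity
    · exact le_rfl
  have hGsum : Summable G := by
    have hle : ∀ n : ℕ, G n ≤ (n:ℝ)^(-σ₂) := by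
      intro n; simp only [hG_def]; split
      · exact le_rfl
      · positivity
    exact Summable.of_nonneg_of_le hGnonneg hle (Real.summable_nat_rpow.mpr (by linarith))
  have hGnorm : Summable (fun n => ‖G n‖) :=
    (summable_congr fun n => Real.norm_of_nonneg (hGnonneg n)).mpr hGsum
  have hGG : Summable (fun q : ℕ × ℕ => G q.1 * G q.2) :=
    hGsum.mul_of_nonneg hGsum hGnonneg hGnonneg
  have hGGnonneg : ∀ q : ℕ × ℕ, 0 ≤ G q.1 * G q.2 :=
    fun q => mul_nonneg (hGnonneg _) (hGnonneg _)
  have hGGnorm : Summable (fun q : ℕ × ℕ => ‖G q.1 * G q.2‖) :=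
    (summable_congr fun q => Real.norm_of_nonneg (hGGnonneg q)).mpr hGG
  set Z : ℝ := ∑' n, G n with hZ_def
  have hZ0 : 0 ≤ Z := tsum_nonneg hGnonneg
  have hC0 : 0 < 2^σ₁ * (r⁻¹ * 2^r) * Z^2 + 1 := by
    have h1' : (0:ℝ) ≤ 2^σ₁ * (r⁻¹ * 2^r) * Z^2 :=
      mul_nonneg (mul_nonneg (Real.rpow_nonneg (by norm_num) _)
        (mul_nonneg (inv_nonneg.mpr hr0.le) (Real.rpow_nonneg (by norm_num) _)))
        (sq_nonneg Z)
    linarith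
  refine ⟨2^σ₁ * (r⁻¹ * 2^r) * Z^2 + 1, hC0, ?_⟩
  intro T hT
  have hT0 : (0:ℝ) < T := by linarith
  set F : ℕ → ℝ := fun m => if T < (m:ℝ) then (m:ℝ)^(-s) else 0 with hF_def
  have hFnonneg : ∀ n, 0 ≤ F n := by
    intro n; simp only [hF_def]; split
    · positivity
    · exact le_rfl
  have hFsum : Summable F := by
    have hle : ∀ n : ℕ, F n ≤ (n:ℝ)^(-s) := by
      intro n; simp only [hF_def]; split
      · exact le_rfl
      · positivity
    exact Summable.of_nonneg_of_le hFnonneg hle (Real.summable_nat_rpow.mpr (by linarith))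
  have hFnorm : Summable (fun n => ‖F n‖) :=
    (summable_congr fun n => Real.norm_of_nonneg (hFnonneg n)).mpr hFsum
  have hP : Summable (fun p : ℕ × ℕ × ℕ => F p.1 * (G p.2.1 * G p.2.2)) :=
    hFsum.mul_of_nonneg hGG hFnonneg hGGnonneg
  -- tail bound for F
  have floor2 : 2 ≤ ⌊T⌋₊ := Nat.le_floor (by exact_mod_cast hT)
  set M : ℕ := ⌊T⌋₊ + 1 with hM_def
  have hiff : ∀ m : ℕ, (T < (m:ℝ)) ↔ M ≤ m := fun m => by
    rw [hM_def, Nat.add_one_le_iff, Nat.floor_lt hT0.le]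
  have hM3 : 3 ≤ M := by omega
  have htail : (∑' m, F m) ≤ r⁻¹ * (2^r * T^(-r)) := by
    apply Summable.tsum_le_of_sum_le hFsum
    intro A
    have hpoint : ∀ m ∈ A, F m ≤
        r⁻¹ * (if M ≤ m then ((m-1:ℕ):ℝ)^(-r) - ((m:ℕ):ℝ)^(-r) else 0) := by
      intro m _
      simp only [hF_def]
      by_cases hm : T < (m:ℝ)
      · rw [if_pos hm, if_pos ((hiff m).mp hm)]
        have hm3 : 3 ≤ m := le_trans hM3 ((hiff m).mp hm)
        have hm2 : (2:ℝ) ≤ (m:ℝ) := by exact_mod_cast (by omega : 2 ≤ m)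
        have hcast : ((m-1:ℕ):ℝ) = (m:ℝ) - 1 := by
          push_cast [Nat.cast_sub (by omega : 1 ≤ m)]; ring
        have hk := key_rpow_ineq hr0 hr1 hm2
        rw [hcast]
        have hs_eq : -s = -(r+1) := by rw [hr_def]; ring
        rw [hs_eq]
        calc (m:ℝ)^(-(r+1)) = r⁻¹ * (r * (m:ℝ)^(-(r+1))) := by field_simp
          _ ≤ r⁻¹ * (((m:ℝ)-1)^(-r) - (m:ℝ)^(-r)) :=
            mul_le_mul_of_nonneg_left hk (inv_nonneg.mpr hr0.le)
      · rw [if_neg hm, if_neg (fun h => hm ((hiff m).mpr h))]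
        simp
    calc ∑ m ∈ A, F m
        ≤ ∑ m ∈ A, r⁻¹ * (if M ≤ m then ((m-1:ℕ):ℝ)^(-r) - ((m:ℕ):ℝ)^(-r) else 0) :=
          Finset.sum_le_sum hpoint
      _ = r⁻¹ * ∑ m ∈ A, (if M ≤ m then ((m-1:ℕ):ℝ)^(-r) - ((m:ℕ):ℝ)^(-r) else 0) := by
          rw [Finset.mul_sum]
      _ ≤ r⁻¹ * (2^r * T^(-r)) := ?_
    refine mul_le_mul_of_nonneg_left ?_ (inv_nonneg.mpr hr0.le)
    rw [show (∑ m ∈ A, (if M ≤ m then ((m-1:ℕ):ℝ)^(-r) - ((m:ℕ):ℝ)^(-r) else 0))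
        = ∑ m ∈ A.filter (fun m => M ≤ m), (((m-1:ℕ):ℝ)^(-r) - ((m:ℕ):ℝ)^(-r))
        from (Finset.sum_filter _ _).symm]
    set N : ℕ := A.sup id with hN_def
    have hsub : A.filter (fun m => M ≤ m) ⊆ Finset.Icc M N := by
      intro m hm
      rw [Finset.mem_filter] at hm
      exact Finset.mem_Icc.mpr ⟨hm.2, Finset.le_sup (f := id) hm.1⟩
    have hnonneg' : ∀ m ∈ Finset.Icc M N, m ∉ A.filter (fun m => M ≤ m) →
        0 ≤ ((m-1:ℕ):ℝ)^(-r) - ((m:ℕ):ℝ)^(-r) := by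
      intro m hm _
      have hm3 : 3 ≤ m := le_trans hM3 (Finset.mem_Icc.mp hm).1
      have h1m : (0:ℝ) < ((m-1:ℕ):ℝ) := by exact_mod_cast (by omega : 0 < m - 1)
      have hle : ((m-1:ℕ):ℝ) ≤ ((m:ℕ):ℝ) := by exact_mod_cast (by omega : m - 1 ≤ m)
      have := Real.rpow_le_rpow_of_nonpos h1m hle (by linarith : -r ≤ 0)
      linarith
    have hstep : ∑ m ∈ A.filter (fun m => M ≤ m), (((m-1:ℕ):ℝ)^(-r) - ((m:ℕ):ℝ)^(-r))
        ≤ ∑ m ∈ Finset.Icc M N, (((m-1:ℕ):ℝ)^(-r) - ((m:ℕ):ℝ)^(-r)) :=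
      Finset.sum_le_sum_of_subset_of_nonneg hsub hnonneg'
    have hglast : ((M-1:ℕ):ℝ)^(-r) ≤ 2^r * T^(-r) := by
      have hfloorhalf : T/2 ≤ ((M-1:ℕ):ℝ) := by
        have hfl : T - 1 < (⌊T⌋₊ : ℝ) := Nat.sub_one_lt_floor T
        have hMe : (M-1:ℕ) = ⌊T⌋₊ := by omega
        rw [hMe]; linarith
      have h2T : (0:ℝ) < T/2 := by linarith
      calc ((M-1:ℕ):ℝ)^(-r) ≤ (T/2)^(-r) :=
            Real.rpow_le_rpow_of_nonpos h2T hfloorhalf (by linarith : -r ≤ 0)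
        _ = 2^r * T^(-r) := by
            rw [Real.div_rpow hT0.le (by norm_num), Real.rpow_neg (by norm_num : (0:ℝ) ≤ 2),
              div_inv_eq_mul]
            ring
    refine hstep.trans ?_
    rcases le_or_gt M N with hMN | hMN
    · have htel := tel_sum (fun n : ℕ => ((n:ℕ):ℝ)^(-r)) M N hMN
      have hN0 : (0:ℝ) ≤ ((N:ℕ):ℝ)^(-r) := Real.rpow_nonneg (Nat.cast_nonneg _) _
      refine htel.trans_le ?_
      linarith
    · rw [Finset.Icc_eq_empty (by omega), Finset.sum_empty]
      have : (0:ℝ) ≤ ((M-1:ℕ):ℝ)^(-r) := Real.rpow_nonneg (Nat.cast_nonneg _) _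
      nlinarith [Real.rpow_nonneg hT0.le (-r), Real.rpow_nonneg (show (0:ℝ) ≤ 2 by norm_num) r]
  -- pointwise bound for the triple term
  have hbound : ∀ p : ℕ × ℕ × ℕ,
      (if T < (p.1 : ℝ) ∧ 1 ≤ p.2.1 ∧ p.2.1 < p.1 ∧ 1 ≤ p.2.2 ∧
          2 * p.2.2 < p.1 + p.2.1 then
        ((p.1 : ℝ) ^ σ₁ * ((p.1 + p.2.1 - p.2.2 : ℕ) : ℝ) ^ σ₁ *
          (p.2.1 : ℝ) ^ σ₂ * (p.2.2 : ℝ) ^ σ₂ *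
          ((p.1 + p.2.1 : ℕ) : ℝ) ^ (2 * σ₃))⁻¹
      else 0) ≤ 2^σ₁ * (F p.1 * (G p.2.1 * G p.2.2)) := by
    rintro ⟨m, n₁, n₂⟩
    dsimp only
    split
    case isFalse h =>
      exact mul_nonneg (Real.rpow_nonneg (by norm_num) _)
        (mul_nonneg (hFnonneg _) (mul_nonneg (hGnonneg _) (hGnonneg _)))
    case isTrue h =>
      obtain ⟨hTm, hn1, hn1m, hn2, hn22⟩ := h
      have hFm : F m = (m:ℝ)^(-s) := by simp only [hF_def]; rw [if_pos hTm]
      have hGn1 : G n₁ = (n₁:ℝ)^(-σ₂) := by simp only [hG_def]; rw [if_pos hn1]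
      have hGn2 : G n₂ = (n₂:ℝ)^(-σ₂) := by simp only [hG_def]; rw [if_pos hn2]
      have hmpos : 0 < m := by omega
      have hm0 : (0:ℝ) < (m:ℝ) := by exact_mod_cast hmpos
      have ha0 : (0:ℝ) < ((m + n₁ - n₂ : ℕ):ℝ) := by
        exact_mod_cast (by omega : 0 < m + n₁ - n₂)
      have hn10 : (0:ℝ) < (n₁:ℝ) := by exact_mod_cast hn1
      have hn20 : (0:ℝ) < (n₂:ℝ) := by exact_mod_cast hn2
      have hb0 : (0:ℝ) < ((m + n₁ : ℕ):ℝ) := by exact_mod_cast (by omega : 0 < m + n₁)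
      have hma : (m:ℝ)/2 ≤ ((m + n₁ - n₂ : ℕ):ℝ) := by
        have hnat : m ≤ 2 * (m + n₁ - n₂) := by omega
        have h' : (m:ℝ) ≤ 2 * ((m + n₁ - n₂ : ℕ):ℝ) := by exact_mod_cast hnat
        linarith
      have hmb : (m:ℝ) ≤ ((m + n₁ : ℕ):ℝ) := by exact_mod_cast Nat.le_add_right m n₁
      rw [hFm, hGn1, hGn2]
      have hms : (m:ℝ)^(-σ₁) * (m:ℝ)^(-σ₁) * (m:ℝ)^(-(2*σ₃)) = (m:ℝ)^(-s) := by
        rw [← Real.rpow_add hm0, ← Real.rpow_add hm0, hs_def]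
        congr 1; ring
      calc ((m:ℝ) ^ σ₁ * ((m + n₁ - n₂ : ℕ):ℝ) ^ σ₁ * (n₁:ℝ) ^ σ₂ * (n₂:ℝ) ^ σ₂ *
            ((m + n₁ : ℕ):ℝ) ^ (2 * σ₃))⁻¹
          = (m:ℝ)^(-σ₁) * ((m + n₁ - n₂ : ℕ):ℝ)^(-σ₁) * (n₁:ℝ)^(-σ₂) * (n₂:ℝ)^(-σ₂) *
            ((m + n₁ : ℕ):ℝ)^(-(2*σ₃)) := by
            rw [mul_inv, mul_inv, mul_inv, mul_inv, ← Real.rpow_neg hm0.le,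
              ← Real.rpow_neg ha0.le, ← Real.rpow_neg hn10.le, ← Real.rpow_neg hn20.le,
              ← Real.rpow_neg hb0.le]
        _ ≤ (m:ℝ)^(-σ₁) * (2^σ₁ * (m:ℝ)^(-σ₁)) * (n₁:ℝ)^(-σ₂) * (n₂:ℝ)^(-σ₂) *
            (m:ℝ)^(-(2*σ₃)) := by
            have hA : ((m + n₁ - n₂ : ℕ):ℝ)^(-σ₁) ≤ 2^σ₁ * (m:ℝ)^(-σ₁) := by
              have h2' : (0:ℝ) < (m:ℝ)/2 := by linarith
              calc ((m + n₁ - n₂ : ℕ):ℝ)^(-σ₁) ≤ ((m:ℝ)/2)^(-σ₁) :=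
                    Real.rpow_le_rpow_of_nonpos h2' hma (by linarith : -σ₁ ≤ 0)
                _ = 2^σ₁ * (m:ℝ)^(-σ₁) := by
                    rw [Real.div_rpow hm0.le (by norm_num),
                      Real.rpow_neg (by norm_num : (0:ℝ) ≤ 2), div_inv_eq_mul]
                    ring
            have hB : ((m + n₁ : ℕ):ℝ)^(-(2*σ₃)) ≤ (m:ℝ)^(-(2*σ₃)) :=
              Real.rpow_le_rpow_of_nonpos hm0 hmb (by linarith : -(2*σ₃) ≤ 0)
            gcongr
        _ = 2^σ₁ * ((m:ℝ)^(-s) * ((n₁:ℝ)^(-σ₂) * (n₂:ℝ)^(-σ₂))) := by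
            rw [← hms]; ring
  have hterm_nonneg : ∀ p : ℕ × ℕ × ℕ,
      0 ≤ (if T < (p.1 : ℝ) ∧ 1 ≤ p.2.1 ∧ p.2.1 < p.1 ∧ 1 ≤ p.2.2 ∧
          2 * p.2.2 < p.1 + p.2.1 then
        ((p.1 : ℝ) ^ σ₁ * ((p.1 + p.2.1 - p.2.2 : ℕ) : ℝ) ^ σ₁ *
          (p.2.1 : ℝ) ^ σ₂ * (p.2.2 : ℝ) ^ σ₂ *
          ((p.1 + p.2.1 : ℕ) : ℝ) ^ (2 * σ₃))⁻¹
      else 0) := by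
    intro p; split
    · positivity
    · exact le_rfl
  have hsum_main : Summable (fun p : ℕ × ℕ × ℕ =>
      if T < (p.1 : ℝ) ∧ 1 ≤ p.2.1 ∧ p.2.1 < p.1 ∧ 1 ≤ p.2.2 ∧
          2 * p.2.2 < p.1 + p.2.1 then
        ((p.1 : ℝ) ^ σ₁ * ((p.1 + p.2.1 - p.2.2 : ℕ) : ℝ) ^ σ₁ *
          (p.2.1 : ℝ) ^ σ₂ * (p.2.2 : ℝ) ^ σ₂ *
          ((p.1 + p.2.1 : ℕ) : ℝ) ^ (2 * σ₃))⁻¹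
      else 0) :=
    Summable.of_nonneg_of_le hterm_nonneg hbound (hP.mul_left _)
  refine ⟨hsum_main, ?_⟩
  calc (∑' p : ℕ × ℕ × ℕ,
        if T < (p.1 : ℝ) ∧ 1 ≤ p.2.1 ∧ p.2.1 < p.1 ∧ 1 ≤ p.2.2 ∧
            2 * p.2.2 < p.1 + p.2.1 then
          ((p.1 : ℝ) ^ σ₁ * ((p.1 + p.2.1 - p.2.2 : ℕ) : ℝ) ^ σ₁ *
            (p.2.1 : ℝ) ^ σ₂ * (p.2.2 : ℝ) ^ σ₂ *
            ((p.1 + p.2.1 : ℕ) : ℝ) ^ (2 * σ₃))⁻¹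
        else 0)
      ≤ ∑' p : ℕ × ℕ × ℕ, 2^σ₁ * (F p.1 * (G p.2.1 * G p.2.2)) :=
        Summable.tsum_le_tsum hbound hsum_main (hP.mul_left _)
    _ = 2^σ₁ * ∑' p : ℕ × ℕ × ℕ, F p.1 * (G p.2.1 * G p.2.2) := tsum_mul_left
    _ = 2^σ₁ * ((∑' m, F m) * ∑' q : ℕ × ℕ, G q.1 * G q.2) :=
        congrArg (fun x => 2^σ₁ * x) (tsum_mul_tsum_of_summable_norm hFnorm hGGnorm).symm
    _ = 2^σ₁ * ((∑' m, F m) * (Z * Z)) := by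
        rw [hZ_def, tsum_mul_tsum_of_summable_norm hGnorm hGnorm]
    _ ≤ 2^σ₁ * ((r⁻¹ * (2^r * T^(-r))) * (Z * Z)) := by
        refine mul_le_mul_of_nonneg_left
          (mul_le_mul_of_nonneg_right htail (mul_nonneg hZ0 hZ0))
          (Real.rpow_nonneg (by norm_num) _)
    _ = (2^σ₁ * (r⁻¹ * 2^r) * Z^2) * T^(-r) := by ring
    _ ≤ (2^σ₁ * (r⁻¹ * 2^r) * Z^2 + 1) * T^(-r) :=
        mul_le_mul_of_nonneg_right (by linarith) (Real.rpow_nonneg hT0.le _)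
    _ = (2^σ₁ * (r⁻¹ * 2^r) * Z^2 + 1) * T^(1 - 2*σ₁ - 2*σ₃) := by
        rw [show -r = 1 - 2*σ₁ - 2*σ₃ by rw [hr_def, hs_def]; ring]
end

section
/- Let \(\sigma_1, \sigma_2 < 1\), \(\sigma_3 > 0\), and \(\frac{3}{2} < \sigma_1+\sigma_2+\sigma_3 \le 2\). For \(T \ge 2\), \(\sum_{\substack{m_1 > T,\; n_1, n_2 \le T,\; m_2 \ge 1 \\ m_1+n_1 = m_2+n_2}} \frac{1}{m_1^{\sigma_1} m_2^{\sigma_1} n_1^{\sigma_2} n_2^{\sigma_2} (m_1+n_1)^{2\sigma_3}} \ll T^{3 - 2\sigma_1 - 2\sigma_2 - 2\sigma_3}\), with implicit constant depending only on the \(\sigma_j\). -/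
/-!
On the diagonal, `m₂ = m₁ + n₁ - n₂` is determined by the other three variables. If
`2 n₂ ≤ m₁ + n₁` then `m₂ ≍ m₁`, and the sum is dominated by
`∑_{m > T} m^{-(2σ₁+2σ₃)} (∑_{n ≤ T} n^{-σ₂})²`; otherwise `n₂ ≍ m₁` and `m₂ < n₂ ≤ T`, and it is
dominated by `∑_{m > T} m^{-(σ₁+σ₂+2σ₃)} ∑_{n ≤ T} n^{-σ₂} ∑_{n ≤ T} n^{-σ₁}`. Both tail exponents
exceed `1` and `σ₁, σ₂ < 1`, so `∑_{m > T} m^{-a} ≪ T^{1-a}` and `∑_{n ≤ T} n^{-b} ≪ T^{1-b}`,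
both by telescoping with the mean value theorem.
-/

open Finset

theorem sum_product_product_mul_mul {α β γ R : Type*} [CommSemiring R] (s : Finset α)
    (t : Finset β) (u : Finset γ) (f : α → R) (g : β → R) (h : γ → R) :
    ∑ q ∈ s ×ˢ t ×ˢ u, f q.1 * g q.2.1 * h q.2.2
      = (∑ a ∈ s, f a) * (∑ b ∈ t, g b) * ∑ c ∈ u, h c := by
  simp only [sum_product, ← mul_sum, ← sum_mul]

theorem sum_le_sum_of_injOn {ι κ M : Type*} [AddCommMonoid M] [PartialOrder M]
    [IsOrderedAddMonoid M] [DecidableEq κ] {u : Finset ι} {s : Finset κ} {f : ι → M}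
    {g : κ → M} (e : ι → κ) (he : Set.InjOn e u) (hes : Set.MapsTo e u s) (hg : ∀ k ∈ s, 0 ≤ g k)
    (hfg : ∀ i ∈ u, f i ≤ g (e i)) : ∑ i ∈ u, f i ≤ ∑ k ∈ s, g k :=
  calc ∑ i ∈ u, f i ≤ ∑ i ∈ u, g (e i) := sum_le_sum hfg
    _ = ∑ k ∈ u.image e, g k := (sum_image he).symm
    _ ≤ ∑ k ∈ s, g k :=
        sum_le_sum_of_subset_of_nonneg (image_subset_iff.2 hes) fun k hk _ => hg k hk

theorem summable_and_tsum_le_of_sum_le {ι : Type*} {f : ι → ℝ} {c : ℝ} (hf : 0 ≤ f)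
    (h : ∀ u : Finset ι, ∑ i ∈ u, f i ≤ c) : Summable f ∧ ∑' i, f i ≤ c :=
  ⟨summable_of_sum_le hf h, Real.tsum_le_of_sum_le hf h⟩

namespace Real

theorem exists_rpow_sub_rpow_sub_one_eq {s x : ℝ} (hx : 1 ≤ x) (hsx : 1 < x ∨ s ≤ 1) :
    ∃ c ∈ Set.Ioo (x - 1) x, x ^ (1 - s) - (x - 1) ^ (1 - s) = (1 - s) * c ^ (-s) := by
  have hderiv : ∀ c ∈ Set.Ioo (x - 1) x, HasDerivAt (· ^ (1 - s)) ((1 - s) * c ^ (-s)) c := by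
    intro c hc
    have := hasDerivAt_rpow_const (p := 1 - s) (Or.inl (by linarith [hc.1] : c ≠ 0))
    rwa [sub_sub_cancel_left] at this
  have hcont : ContinuousOn (· ^ (1 - s)) (Set.Icc (x - 1) x) :=
    continuousOn_id.rpow_const fun y hy => by
      rcases hsx with h | h
      · exact Or.inl (by simp only [id]; linarith [hy.1])
      · exact Or.inr (by linarith)
  obtain ⟨c, hc, heq⟩ := exists_hasDerivAt_eq_slope _ _ (by linarith) hcont hderiv
  exact ⟨c, hc, by rw [heq, sub_sub_cancel, div_one]⟩

theorem one_sub_mul_rpow_neg_le_rpow_sub_rpow {s x : ℝ} (hs₀ : 0 ≤ s) (hs₁ : s ≤ 1)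
    (hx : 1 ≤ x) :
    (1 - s) * x ^ (-s) ≤ x ^ (1 - s) - (x - 1) ^ (1 - s) := by
  obtain ⟨c, hc, heq⟩ := exists_rpow_sub_rpow_sub_one_eq hx (Or.inr hs₁)
  rw [heq]
  exact mul_le_mul_of_nonneg_left
    (rpow_le_rpow_of_nonpos (by linarith [hc.1]) hc.2.le (by linarith)) (by linarith)

theorem sub_one_mul_rpow_neg_le_rpow_sub_rpow {s x : ℝ} (hs : 1 < s) (hx : 1 < x) :
    (s - 1) * x ^ (-s) ≤ (x - 1) ^ (1 - s) - x ^ (1 - s) := by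
  obtain ⟨c, hc, heq⟩ := exists_rpow_sub_rpow_sub_one_eq (s := s) hx.le (Or.inl hx)
  rw [show (x - 1) ^ (1 - s) - x ^ (1 - s) = (s - 1) * c ^ (-s) by linarith]
  exact mul_le_mul_of_nonneg_left
    (rpow_le_rpow_of_nonpos (by linarith [hc.1]) hc.2.le (by linarith)) (by linarith)

theorem rpow_le_two_rpow_abs_mul_rpow {x y σ : ℝ} (hx : 0 < x) (hy : 0 < y) (hxy : x ≤ 2 * y)
    (hyx : y ≤ 2 * x) : x ^ σ ≤ 2 ^ |σ| * y ^ σ := by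
  rcases le_total 0 σ with h | h
  · calc x ^ σ ≤ (2 * y) ^ σ := rpow_le_rpow hx.le hxy h
      _ = 2 ^ |σ| * y ^ σ := by rw [mul_rpow zero_le_two hy.le, abs_of_nonneg h]
  · calc x ^ σ = 2 ^ (-σ) * (2 * x) ^ σ := by
          rw [mul_rpow zero_le_two hx.le, ← mul_assoc, ← rpow_add two_pos]; simp
      _ ≤ 2 ^ (-σ) * y ^ σ :=
          mul_le_mul_of_nonneg_left (rpow_le_rpow_of_nonpos hy hyx h) (by positivity)
      _ = 2 ^ |σ| * y ^ σ := by rw [abs_of_nonpos h]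

theorem inv_rpow_mul_rpow_mul_rpow_le {m k s α β γ : ℝ} (hm : 0 < m) (hk : 0 < k)
    (hmk : m ≤ 2 * k) (hkm : k ≤ 2 * m) (hms : m ≤ s) (hγ : 0 ≤ γ) :
    (m ^ α * k ^ β * s ^ γ)⁻¹ ≤ 2 ^ |β| * m ^ (-(α + β + γ)) := by
  have hle : m ^ (α + β + γ) ≤ (m ^ α * k ^ β * s ^ γ) * 2 ^ |β| :=
    calc m ^ (α + β + γ) = m ^ α * m ^ β * m ^ γ := by rw [rpow_add hm, rpow_add hm]
      _ ≤ m ^ α * (2 ^ |β| * k ^ β) * s ^ γ := by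
          gcongr
          exact rpow_le_two_rpow_abs_mul_rpow hm hk hmk hkm
      _ = _ := by ring
  have hs : 0 < s := hm.trans_le hms
  rw [rpow_neg hm.le, ← div_eq_mul_inv, le_div_iff₀ (rpow_pos_of_pos hm _),
    inv_mul_le_iff₀ (by positivity)]
  exact hle

end Real

open Real

theorem sum_Icc_rpow_neg_le_of_nonpos {σ : ℝ} (hσ : σ ≤ 0) (N : ℕ) :
    ∑ n ∈ Icc 1 N, (n : ℝ) ^ (-σ) ≤ (N : ℝ) ^ (1 - σ) := by
  rcases N.eq_zero_or_pos with rfl | hN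
  · simp [zero_rpow (by linarith : 1 - σ ≠ 0)]
  calc ∑ n ∈ Icc 1 N, (n : ℝ) ^ (-σ) ≤ ∑ _n ∈ Icc 1 N, (N : ℝ) ^ (-σ) := by
        refine sum_le_sum fun n hn => rpow_le_rpow (Nat.cast_nonneg n) ?_ (by linarith)
        exact_mod_cast (mem_Icc.1 hn).2
    _ = (N : ℝ) ^ (1 - σ) := by
        rw [sum_const, Nat.card_Icc, nsmul_eq_mul, sub_eq_add_neg, rpow_add (by positivity),
          rpow_one, add_tsub_cancel_right]

theorem sum_Icc_rpow_neg_le_of_nonneg {σ : ℝ} (hσ₀ : 0 ≤ σ) (hσ₁ : σ < 1) (N : ℕ) :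
    ∑ n ∈ Icc 1 N, (n : ℝ) ^ (-σ) ≤ (1 - σ)⁻¹ * (N : ℝ) ^ (1 - σ) := by
  induction N with
  | zero => simp [zero_rpow (by linarith : 1 - σ ≠ 0)]
  | succ N ih =>
    have hstep := one_sub_mul_rpow_neg_le_rpow_sub_rpow hσ₀ hσ₁.le
      (by simp : (1 : ℝ) ≤ (N + 1 : ℕ))
    rw [sum_Icc_succ_top (by omega)]
    push_cast at hstep ⊢
    rw [add_sub_cancel_right] at hstep
    calc _ ≤ (1 - σ)⁻¹ * (N : ℝ) ^ (1 - σ)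
            + (1 - σ)⁻¹ * (((N : ℝ) + 1) ^ (1 - σ) - (N : ℝ) ^ (1 - σ)) :=
          add_le_add ih ((le_inv_mul_iff₀ (by linarith)).2 hstep)
      _ = _ := by ring

theorem sum_Ioc_rpow_neg_le {a : ℝ} (ha : 1 < a) {N : ℕ} (hN : 0 < N) (M : ℕ) :
    ∑ n ∈ Ioc N M, (n : ℝ) ^ (-a) ≤ (a - 1)⁻¹ * (N : ℝ) ^ (1 - a) := by
  have ha' : 0 < a - 1 := by linarith
  rcases lt_or_ge M N with hMN | hNM
  · rw [Ioc_eq_empty_of_le hMN.le, sum_empty]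
    positivity
  have htele : ∑ n ∈ Ioc N M, (n : ℝ) ^ (-a)
      ≤ (a - 1)⁻¹ * ((N : ℝ) ^ (1 - a) - (M : ℝ) ^ (1 - a)) := by
    induction M, hNM using Nat.le_induction with
    | base => simp
    | succ M hNM ih =>
      have hstep := sub_one_mul_rpow_neg_le_rpow_sub_rpow ha
        (by norm_cast; omega : (1 : ℝ) < (M + 1 : ℕ))
      rw [sum_Ioc_succ_top hNM]
      push_cast at hstep ⊢
      rw [add_sub_cancel_right] at hstep
      calc _ ≤ (a - 1)⁻¹ * ((N : ℝ) ^ (1 - a) - (M : ℝ) ^ (1 - a))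
            + (a - 1)⁻¹ * ((M : ℝ) ^ (1 - a) - ((M : ℝ) + 1) ^ (1 - a)) :=
            add_le_add ih ((le_inv_mul_iff₀ ha').2 hstep)
        _ = _ := by ring
  calc _ ≤ (a - 1)⁻¹ * ((N : ℝ) ^ (1 - a) - (M : ℝ) ^ (1 - a)) := htele
    _ ≤ (a - 1)⁻¹ * (N : ℝ) ^ (1 - a) :=
        mul_le_mul_of_nonneg_left (sub_le_self _ (by positivity)) (by positivity)

theorem sum_Icc_rpow_neg_le_s14 {σ : ℝ} (hσ : σ < 1) (N : ℕ) :
    ∑ n ∈ Icc 1 N, (n : ℝ) ^ (-σ) ≤ max 1 (1 - σ)⁻¹ * (N : ℝ) ^ (1 - σ) := by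
  rcases le_total σ 0 with h | h
  · exact (sum_Icc_rpow_neg_le_of_nonpos h N).trans
      (le_mul_of_one_le_left (by positivity) (le_max_left _ _))
  · exact (sum_Icc_rpow_neg_le_of_nonneg h hσ N).trans
      (mul_le_mul_of_nonneg_right (le_max_right _ _) (by positivity))

noncomputable def boxSum (a b c : ℝ) (N M : ℕ) : ℝ :=
  ∑ q ∈ Ioc N M ×ˢ Icc 1 N ×ˢ Icc 1 N,
    (q.1 : ℝ) ^ (-a) * (q.2.1 : ℝ) ^ (-b) * (q.2.2 : ℝ) ^ (-c)

theorem boxSum_le {a b c : ℝ} (ha : 1 < a) (hb : b < 1) (hc : c < 1) :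
    ∃ C > 0, ∀ T : ℝ, 2 ≤ T → ∀ M : ℕ, boxSum a b c ⌊T⌋₊ M ≤ C * T ^ (3 - a - b - c) := by
  have ha' : 0 < a - 1 := by linarith
  refine ⟨(a - 1)⁻¹ * 2 ^ (a - 1) * max 1 (1 - b)⁻¹ * max 1 (1 - c)⁻¹, by positivity,
    fun T hT M => ?_⟩
  set N := ⌊T⌋₊
  have hT : 0 < T := by linarith
  have hN : 0 < N := Nat.floor_pos.2 (by linarith)
  have hNT : (N : ℝ) ≤ T := Nat.floor_le hT.le
  have hTN : T / 2 ≤ N := by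
    have := Nat.lt_floor_add_one T
    have : (1 : ℝ) ≤ N := by exact_mod_cast hN
    linarith
  have htail : ∑ m ∈ Ioc N M, (m : ℝ) ^ (-a) ≤ (a - 1)⁻¹ * 2 ^ (a - 1) * T ^ (1 - a) :=
    calc _ ≤ (a - 1)⁻¹ * (N : ℝ) ^ (1 - a) := sum_Ioc_rpow_neg_le ha hN M
      _ ≤ (a - 1)⁻¹ * (T / 2) ^ (1 - a) := by
          refine mul_le_mul_of_nonneg_left ?_ (inv_nonneg.2 ha'.le)
          exact rpow_le_rpow_of_nonpos (by positivity) hTN (by linarith)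
      _ = _ := by
          rw [div_rpow hT.le zero_le_two, div_eq_mul_inv, ← rpow_neg zero_le_two, neg_sub]
          ring
  have hhead : ∀ σ : ℝ, σ < 1 → ∑ n ∈ Icc 1 N, (n : ℝ) ^ (-σ) ≤ max 1 (1 - σ)⁻¹ * T ^ (1 - σ) :=
    fun σ hσ => (sum_Icc_rpow_neg_le_s14 hσ N).trans (by gcongr)
  rw [boxSum, sum_product_product_mul_mul _ _ _ (fun m : ℕ => (m : ℝ) ^ (-a))
    (fun n : ℕ => (n : ℝ) ^ (-b)) (fun n : ℕ => (n : ℝ) ^ (-c))]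
  calc _ ≤ ((a - 1)⁻¹ * 2 ^ (a - 1) * T ^ (1 - a)) * (max 1 (1 - b)⁻¹ * T ^ (1 - b))
        * (max 1 (1 - c)⁻¹ * T ^ (1 - c)) := by
        gcongr
        · exact hhead b hb
        · exact hhead c hc
    _ = _ := by
        rw [show 3 - a - b - c = (1 - a) + (1 - b) + (1 - c) by ring, rpow_add hT, rpow_add hT]
        ring

/-- Here `p = (m₁, n₁, m₂, n₂)`. -/
def InDiagonalTail (T : ℝ) (p : ℕ × ℕ × ℕ × ℕ) : Prop :=
  T < (p.1 : ℝ) ∧ 1 ≤ p.2.1 ∧ (p.2.1 : ℝ) ≤ T ∧ 1 ≤ p.2.2.1 ∧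
    1 ≤ p.2.2.2 ∧ (p.2.2.2 : ℝ) ≤ T ∧ p.1 + p.2.1 = p.2.2.1 + p.2.2.2

noncomputable def diagonalTerm (σ₁ σ₂ σ₃ : ℝ) (p : ℕ × ℕ × ℕ × ℕ) : ℝ :=
  ((p.1 : ℝ) ^ σ₁ * (p.2.2.1 : ℝ) ^ σ₁ * (p.2.1 : ℝ) ^ σ₂ *
    (p.2.2.2 : ℝ) ^ σ₂ * ((p.1 + p.2.1 : ℕ) : ℝ) ^ (2 * σ₃))⁻¹

section Diagonal

variable {σ₁ σ₂ σ₃ T : ℝ} {m₁ n₁ m₂ n₂ : ℕ}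

theorem InDiagonalTail.floor_bounds (h : InDiagonalTail T (m₁, n₁, m₂, n₂)) :
    ⌊T⌋₊ < m₁ ∧ n₁ ≤ ⌊T⌋₊ ∧ n₂ ≤ ⌊T⌋₊ := by
  obtain ⟨hm₁, hn₁, hn₁T, -, -, hn₂T, -⟩ := h
  have : (1 : ℝ) ≤ n₁ := by exact_mod_cast hn₁
  exact ⟨(Nat.floor_lt' (by rintro rfl; simp at hm₁; linarith)).2 hm₁,
    Nat.le_floor hn₁T, Nat.le_floor hn₂T⟩

theorem InDiagonalTail.diagonalTerm_le_of_two_mul_le (hσ₃ : 0 ≤ σ₃)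
    (h : InDiagonalTail T (m₁, n₁, m₂, n₂)) (hn₂ : 2 * n₂ ≤ m₁ + n₁) :
    diagonalTerm σ₁ σ₂ σ₃ (m₁, n₁, m₂, n₂)
      ≤ 2 ^ |σ₁| * ((m₁ : ℝ) ^ (-(σ₁ + σ₁ + 2 * σ₃)) * (n₁ : ℝ) ^ (-σ₂) * (n₂ : ℝ) ^ (-σ₂)) := by
  obtain ⟨hm₁, hn₁, hn₁T, hm₂, -, hn₂T, hdiag⟩ := h
  have hn₁' : (1 : ℝ) ≤ n₁ := by exact_mod_cast hn₁
  have hm₂' : (1 : ℝ) ≤ m₂ := by exact_mod_cast hm₂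
  have hdiag' : (m₁ + n₁ : ℝ) = m₂ + n₂ := by exact_mod_cast hdiag
  have hn₂' : 2 * (n₂ : ℝ) ≤ m₁ + n₁ := by exact_mod_cast hn₂
  calc diagonalTerm σ₁ σ₂ σ₃ (m₁, n₁, m₂, n₂)
      = ((m₁ : ℝ) ^ σ₁ * (m₂ : ℝ) ^ σ₁ * ((m₁ : ℝ) + n₁) ^ (2 * σ₃))⁻¹
          * ((n₁ : ℝ) ^ (-σ₂) * (n₂ : ℝ) ^ (-σ₂)) := by
        simp only [diagonalTerm, mul_inv, rpow_neg (Nat.cast_nonneg _), Nat.cast_add]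
        ring
    _ ≤ 2 ^ |σ₁| * (m₁ : ℝ) ^ (-(σ₁ + σ₁ + 2 * σ₃)) * ((n₁ : ℝ) ^ (-σ₂) * (n₂ : ℝ) ^ (-σ₂)) := by
        gcongr
        exact inv_rpow_mul_rpow_mul_rpow_le (by linarith) (by linarith) (by linarith)
          (by linarith) (by linarith) (by linarith)
    _ = _ := by ring

theorem InDiagonalTail.diagonalTerm_le_of_lt_two_mul (hσ₃ : 0 ≤ σ₃)
    (h : InDiagonalTail T (m₁, n₁, m₂, n₂)) (hn₂ : m₁ + n₁ < 2 * n₂) :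
    diagonalTerm σ₁ σ₂ σ₃ (m₁, n₁, m₂, n₂)
      ≤ 2 ^ |σ₂| * ((m₁ : ℝ) ^ (-(σ₁ + σ₂ + 2 * σ₃)) * (n₁ : ℝ) ^ (-σ₂) * (m₂ : ℝ) ^ (-σ₁)) := by
  obtain ⟨hm₁, hn₁, hn₁T, -, hn₂pos, hn₂T, -⟩ := h
  have hn₁' : (1 : ℝ) ≤ n₁ := by exact_mod_cast hn₁
  have hn₂'' : (1 : ℝ) ≤ n₂ := by exact_mod_cast hn₂pos
  have hn₂' : (m₁ + n₁ : ℝ) < 2 * n₂ := by exact_mod_cast hn₂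
  calc diagonalTerm σ₁ σ₂ σ₃ (m₁, n₁, m₂, n₂)
      = ((m₁ : ℝ) ^ σ₁ * (n₂ : ℝ) ^ σ₂ * ((m₁ : ℝ) + n₁) ^ (2 * σ₃))⁻¹
          * ((n₁ : ℝ) ^ (-σ₂) * (m₂ : ℝ) ^ (-σ₁)) := by
        simp only [diagonalTerm, mul_inv, rpow_neg (Nat.cast_nonneg _), Nat.cast_add]
        ring
    _ ≤ 2 ^ |σ₂| * (m₁ : ℝ) ^ (-(σ₁ + σ₂ + 2 * σ₃)) * ((n₁ : ℝ) ^ (-σ₂) * (m₂ : ℝ) ^ (-σ₁)) := by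
        gcongr
        exact inv_rpow_mul_rpow_mul_rpow_le (by linarith) (by linarith) (by linarith)
          (by linarith) (by linarith) (by linarith)
    _ = _ := by ring

end Diagonal

section DiagonalSum

variable {σ₁ σ₂ σ₃ T : ℝ} {u : Finset (ℕ × ℕ × ℕ × ℕ)} {M : ℕ}

theorem sum_diagonalTerm_le_of_two_mul_le (hσ₃ : 0 ≤ σ₃)
    (hu : ∀ p ∈ u, InDiagonalTail T p ∧ p.1 ≤ M ∧ 2 * p.2.2.2 ≤ p.1 + p.2.1) :
    ∑ p ∈ u, diagonalTerm σ₁ σ₂ σ₃ p ≤ 2 ^ |σ₁| * boxSum (σ₁ + σ₁ + 2 * σ₃) σ₂ σ₂ ⌊T⌋₊ M := by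
  rw [boxSum, mul_sum]
  refine sum_le_sum_of_injOn (fun p => (p.1, p.2.1, p.2.2.2)) ?_ ?_
    (fun _ _ => by positivity) ?_
  · rintro ⟨m₁, n₁, m₂, n₂⟩ hp ⟨m₁', n₁', m₂', n₂'⟩ hp' heq
    have hd := (hu _ hp).1.2.2.2.2.2.2
    have hd' := (hu _ hp').1.2.2.2.2.2.2
    simp only [Prod.mk.injEq] at heq hd hd' ⊢
    omega
  · rintro ⟨m₁, n₁, m₂, n₂⟩ hp
    obtain ⟨h, hM, -⟩ := hu _ hp
    obtain ⟨hm₁, hn₁, hn₂⟩ := h.floor_bounds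
    simp only [coe_product, Set.mem_prod, mem_coe, mem_Ioc, mem_Icc]
    exact ⟨⟨hm₁, hM⟩, ⟨h.2.1, hn₁⟩, ⟨h.2.2.2.2.1, hn₂⟩⟩
  · rintro ⟨m₁, n₁, m₂, n₂⟩ hp
    obtain ⟨h, -, hn₂⟩ := hu _ hp
    exact h.diagonalTerm_le_of_two_mul_le hσ₃ hn₂

theorem sum_diagonalTerm_le_of_lt_two_mul (hσ₃ : 0 ≤ σ₃)
    (hu : ∀ p ∈ u, InDiagonalTail T p ∧ p.1 ≤ M ∧ p.1 + p.2.1 < 2 * p.2.2.2) :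
    ∑ p ∈ u, diagonalTerm σ₁ σ₂ σ₃ p ≤ 2 ^ |σ₂| * boxSum (σ₁ + σ₂ + 2 * σ₃) σ₂ σ₁ ⌊T⌋₊ M := by
  rw [boxSum, mul_sum]
  refine sum_le_sum_of_injOn (fun p => (p.1, p.2.1, p.2.2.1)) ?_ ?_
    (fun _ _ => by positivity) ?_
  · rintro ⟨m₁, n₁, m₂, n₂⟩ hp ⟨m₁', n₁', m₂', n₂'⟩ hp' heq
    have hd := (hu _ hp).1.2.2.2.2.2.2
    have hd' := (hu _ hp').1.2.2.2.2.2.2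
    simp only [Prod.mk.injEq] at heq hd hd' ⊢
    omega
  · rintro ⟨m₁, n₁, m₂, n₂⟩ hp
    obtain ⟨h, hM, hn₂⟩ := hu _ hp
    obtain ⟨hm₁, hn₁, hn₂T⟩ := h.floor_bounds
    have hm₂ : m₂ ≤ ⌊T⌋₊ := by have := h.2.2.2.2.2.2; dsimp only at hn₂ this; omega
    simp only [coe_product, Set.mem_prod, mem_coe, mem_Ioc, mem_Icc]
    exact ⟨⟨hm₁, hM⟩, ⟨h.2.1, hn₁⟩, ⟨h.2.2.2.1, hm₂⟩⟩
  · rintro ⟨m₁, n₁, m₂, n₂⟩ hp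
    obtain ⟨h, -, hn₂⟩ := hu _ hp
    exact h.diagonalTerm_le_of_lt_two_mul hσ₃ hn₂

theorem sum_diagonalTerm_le (hσ₃ : 0 ≤ σ₃) (hu : ∀ p ∈ u, InDiagonalTail T p) :
    ∑ p ∈ u, diagonalTerm σ₁ σ₂ σ₃ p
      ≤ 2 ^ |σ₁| * boxSum (σ₁ + σ₁ + 2 * σ₃) σ₂ σ₂ ⌊T⌋₊ (u.sup Prod.fst)
        + 2 ^ |σ₂| * boxSum (σ₁ + σ₂ + 2 * σ₃) σ₂ σ₁ ⌊T⌋₊ (u.sup Prod.fst) := by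
  rw [← sum_filter_add_sum_filter_not u fun p => 2 * p.2.2.2 ≤ p.1 + p.2.1]
  refine add_le_add (sum_diagonalTerm_le_of_two_mul_le hσ₃ fun p hp => ?_)
    (sum_diagonalTerm_le_of_lt_two_mul hσ₃ fun p hp => ?_) <;>
  · rw [mem_filter] at hp
    exact ⟨hu p hp.1, le_sup (f := Prod.fst) hp.1, by omega⟩

end DiagonalSum

open scoped Classical in
theorem diagonal_tail_sum_bound_general (σ₁ σ₂ σ₃ : ℝ) (h1 : σ₁ < 1) (h2 : σ₂ < 1)
    (h3 : 0 < σ₃) (hl : 3 / 2 < σ₁ + σ₂ + σ₃) :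
    ∃ C > 0, ∀ T : ℝ, 2 ≤ T →
      Summable (fun p : ℕ × ℕ × ℕ × ℕ =>
        if T < (p.1 : ℝ) ∧ 1 ≤ p.2.1 ∧ (p.2.1 : ℝ) ≤ T ∧ 1 ≤ p.2.2.1 ∧
            1 ≤ p.2.2.2 ∧ (p.2.2.2 : ℝ) ≤ T ∧ p.1 + p.2.1 = p.2.2.1 + p.2.2.2 then
          ((p.1 : ℝ) ^ σ₁ * (p.2.2.1 : ℝ) ^ σ₁ * (p.2.1 : ℝ) ^ σ₂ *
            (p.2.2.2 : ℝ) ^ σ₂ * ((p.1 + p.2.1 : ℕ) : ℝ) ^ (2 * σ₃))⁻¹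
        else 0) ∧
      (∑' p : ℕ × ℕ × ℕ × ℕ,
        if T < (p.1 : ℝ) ∧ 1 ≤ p.2.1 ∧ (p.2.1 : ℝ) ≤ T ∧ 1 ≤ p.2.2.1 ∧
            1 ≤ p.2.2.2 ∧ (p.2.2.2 : ℝ) ≤ T ∧ p.1 + p.2.1 = p.2.2.1 + p.2.2.2 then
          ((p.1 : ℝ) ^ σ₁ * (p.2.2.1 : ℝ) ^ σ₁ * (p.2.1 : ℝ) ^ σ₂ *
            (p.2.2.2 : ℝ) ^ σ₂ * ((p.1 + p.2.1 : ℕ) : ℝ) ^ (2 * σ₃))⁻¹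
        else 0) ≤ C * T ^ (3 - 2 * σ₁ - 2 * σ₂ - 2 * σ₃) := by
  obtain ⟨C₁, hC₁, hbox₁⟩ := boxSum_le (a := σ₁ + σ₁ + 2 * σ₃) (by linarith) h2 h2
  obtain ⟨C₂, hC₂, hbox₂⟩ := boxSum_le (a := σ₁ + σ₂ + 2 * σ₃) (by linarith) h2 h1
  refine ⟨2 ^ |σ₁| * C₁ + 2 ^ |σ₂| * C₂, by positivity, fun T hT => ?_⟩
  have hpartial : ∀ u : Finset (ℕ × ℕ × ℕ × ℕ), (∀ p ∈ u, InDiagonalTail T p) →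
      ∑ p ∈ u, diagonalTerm σ₁ σ₂ σ₃ p
        ≤ (2 ^ |σ₁| * C₁ + 2 ^ |σ₂| * C₂) * T ^ (3 - 2 * σ₁ - 2 * σ₂ - 2 * σ₃) := by
    intro u hu
    have h₁ := hbox₁ T hT (u.sup Prod.fst)
    have h₂ := hbox₂ T hT (u.sup Prod.fst)
    rw [show 3 - (σ₁ + σ₁ + 2 * σ₃) - σ₂ - σ₂ = 3 - 2 * σ₁ - 2 * σ₂ - 2 * σ₃ by ring] at h₁
    rw [show 3 - (σ₁ + σ₂ + 2 * σ₃) - σ₂ - σ₁ = 3 - 2 * σ₁ - 2 * σ₂ - 2 * σ₃ by ring] at h₂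
    calc _ ≤ _ := sum_diagonalTerm_le h3.le hu
      _ ≤ 2 ^ |σ₁| * (C₁ * T ^ (3 - 2 * σ₁ - 2 * σ₂ - 2 * σ₃))
          + 2 ^ |σ₂| * (C₂ * T ^ (3 - 2 * σ₁ - 2 * σ₂ - 2 * σ₃)) := by gcongr
      _ = _ := by ring
  refine summable_and_tsum_le_of_sum_le (fun p => ?_) fun u => ?_
  · dsimp only [Pi.zero_apply]
    split_ifs
    · positivity
    · rfl
  · rw [← sum_filter]
    exact hpartial _ fun p hp => (mem_filter.1 hp).2

open scoped Classical in
/-- Diagonal tail estimate: for `σ₁, σ₂ < 1`, `σ₃ > 0`,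
`3/2 < σ₁+σ₂+σ₃ ≤ 2`, the sum over `m₁ > T`, `n₁, n₂ ≤ T`, `m₂ ≥ 1` with
`m₁+n₁ = m₂+n₂` is `≪ T^{3-2σ₁-2σ₂-2σ₃}`. -/
theorem diagonal_tail_sum_bound (σ₁ σ₂ σ₃ : ℝ) (h1 : σ₁ < 1) (h2 : σ₂ < 1)
    (h3 : 0 < σ₃) (hl : 3 / 2 < σ₁ + σ₂ + σ₃) (hu : σ₁ + σ₂ + σ₃ ≤ 2) :
    ∃ C > 0, ∀ T : ℝ, 2 ≤ T →
      Summable (fun p : ℕ × ℕ × ℕ × ℕ =>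
        if T < (p.1 : ℝ) ∧ 1 ≤ p.2.1 ∧ (p.2.1 : ℝ) ≤ T ∧ 1 ≤ p.2.2.1 ∧
            1 ≤ p.2.2.2 ∧ (p.2.2.2 : ℝ) ≤ T ∧ p.1 + p.2.1 = p.2.2.1 + p.2.2.2 then
          ((p.1 : ℝ) ^ σ₁ * (p.2.2.1 : ℝ) ^ σ₁ * (p.2.1 : ℝ) ^ σ₂ *
            (p.2.2.2 : ℝ) ^ σ₂ * ((p.1 + p.2.1 : ℕ) : ℝ) ^ (2 * σ₃))⁻¹
        else 0) ∧
      (∑' p : ℕ × ℕ × ℕ × ℕ,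
        if T < (p.1 : ℝ) ∧ 1 ≤ p.2.1 ∧ (p.2.1 : ℝ) ≤ T ∧ 1 ≤ p.2.2.1 ∧
            1 ≤ p.2.2.2 ∧ (p.2.2.2 : ℝ) ≤ T ∧ p.1 + p.2.1 = p.2.2.1 + p.2.2.2 then
          ((p.1 : ℝ) ^ σ₁ * (p.2.2.1 : ℝ) ^ σ₁ * (p.2.1 : ℝ) ^ σ₂ *
            (p.2.2.2 : ℝ) ^ σ₂ * ((p.1 + p.2.1 : ℕ) : ℝ) ^ (2 * σ₃))⁻¹
        else 0) ≤ C * T ^ (3 - 2 * σ₁ - 2 * σ₂ - 2 * σ₃) :=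
  diagonal_tail_sum_bound_general σ₁ σ₂ σ₃ h1 h2 h3 hl
end

section
/- Let \(\sigma_1 \ge 0\), \(\sigma_3 > 0\) with \(\frac{1}{2} < \sigma_1+\sigma_3 \le 1\), and \(\sigma_2 > 1\). Then for \(T \ge 2\), \(\sum_{2 \le m_1 \le T} \sum_{n_1 < m_1} \frac{\log(m_1+n_1)}{m_1^{\sigma_1} n_1^{\sigma_2} (m_1+n_1)^{\sigma_1+2\sigma_3-1}} \ll T^{2-2\sigma_1-2\sigma_3} \log T\) when \(\sigma_1+\sigma_3 < 1\), and \(\ll (\log T)^2\) when \(\sigma_1+\sigma_3 = 1\), with implicit constants depending only on the \(\sigma_j\). -/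
/-!
Since `n < m`, `log (m + n) ≤ 2 log m` and `(m + n) ^ e ≥ 2 ^ (-|e|) m ^ e` for every real `e`,
so the inner sum over `n` is at most a constant times `log m · m ^ (-a)` with
`a = 2σ₁ + 2σ₃ - 1`, the constant absorbing the convergent series `∑ n ^ (-σ₂)`.
Comparing the outer sum `∑_{2 ≤ m ≤ T} m ^ (-a)` with `∫₁ᵀ x ^ (-a) dx` gives
`T ^ (1 - a) / (1 - a)` for `0 < a < 1` and `log T` for `a = 1`.
-/

open Finset Real

lemma rpow_le_two_rpow_abs_mul_rpow {x y e : ℝ} (hx : 0 < x) (hxy : x ≤ y) (hy : y ≤ 2 * x) :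
    x ^ e ≤ 2 ^ |e| * y ^ e := by
  rcases le_or_gt 0 e with he | he
  · calc x ^ e ≤ y ^ e := rpow_le_rpow hx.le hxy he
      _ ≤ 2 ^ |e| * y ^ e :=
        le_mul_of_one_le_left (rpow_nonneg (hx.le.trans hxy) e)
          (one_le_rpow (by norm_num) (abs_nonneg e))
  · calc x ^ e = 2 ^ (-e) * (2 * x) ^ e := by
          rw [mul_rpow zero_le_two hx.le, ← mul_assoc, ← rpow_add zero_lt_two, neg_add_cancel,
            rpow_zero, one_mul]
      _ ≤ 2 ^ |e| * y ^ e := by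
        rw [abs_of_neg he]
        exact mul_le_mul_of_nonneg_left (rpow_le_rpow_of_nonpos (hx.trans_le hxy) hy he.le)
          (by positivity)

lemma log_add_le_two_mul_log {m n : ℕ} (hm : 2 ≤ m) (hn : n ≤ m) :
    log ((m + n : ℕ) : ℝ) ≤ 2 * log m := by
  have hm' : (2 : ℝ) ≤ m := by exact_mod_cast hm
  have hn' : (n : ℝ) ≤ m := by exact_mod_cast hn
  calc log ((m + n : ℕ) : ℝ) ≤ log (m * m) := by
        push_cast
        exact log_le_log (by positivity) (by nlinarith)
    _ = 2 * log m := by rw [log_mul (by positivity) (by positivity)]; ring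

lemma log_div_rpow_le {σ₁ σ₂ e : ℝ} {m n : ℕ} (hm : 2 ≤ m) (hn : 1 ≤ n) (hnm : n ≤ m) :
    log ((m + n : ℕ) : ℝ) / ((m : ℝ) ^ σ₁ * (n : ℝ) ^ σ₂ * ((m + n : ℕ) : ℝ) ^ e)
      ≤ 2 * 2 ^ |e| * log m * ((m : ℝ) ^ (-(σ₁ + e)) * (n : ℝ) ^ (-σ₂)) := by
  have hm0 : (0 : ℝ) < m := by positivity
  have hn0 : (0 : ℝ) < n := by positivity
  have hmn : (m : ℝ) ≤ ((m + n : ℕ) : ℝ) := by push_cast; linarith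
  have hmn' : ((m + n : ℕ) : ℝ) ≤ 2 * m := by
    push_cast; linarith [(Nat.cast_le.2 hnm : (n : ℝ) ≤ m)]
  have hcomp := rpow_le_two_rpow_abs_mul_rpow (e := e) hm0 hmn hmn'
  rw [rpow_neg hm0.le, rpow_neg hn0.le, rpow_add hm0, div_le_iff₀ (by positivity)]
  calc log ((m + n : ℕ) : ℝ) ≤ 2 * log m := log_add_le_two_mul_log hm hnm
    _ = 2 * log m * ((m : ℝ) ^ e)⁻¹ * (m : ℝ) ^ e := by field_simp
    _ ≤ 2 * log m * ((m : ℝ) ^ e)⁻¹ * (2 ^ |e| * ((m + n : ℕ) : ℝ) ^ e) := by gcongr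
    _ = _ := by field_simp

lemma sum_Ico_one_rpow_neg_le_tsum {s : ℝ} (hs : 1 < s) (m : ℕ) :
    ∑ n ∈ Ico 1 m, (n : ℝ) ^ (-s) ≤ ∑' n : ℕ, (n : ℝ) ^ (-s) :=
  (summable_nat_rpow.2 (by linarith)).sum_le_tsum _ fun n _ => rpow_nonneg n.cast_nonneg _

lemma weighted_double_sum_le (σ₁ e : ℝ) {σ₂ : ℝ} (hσ₂ : 1 < σ₂) (N : ℕ) :
    ∑ m ∈ Icc 2 N, ∑ n ∈ Ico 1 m,
        log ((m + n : ℕ) : ℝ) / ((m : ℝ) ^ σ₁ * (n : ℝ) ^ σ₂ * ((m + n : ℕ) : ℝ) ^ e)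
      ≤ 2 * 2 ^ |e| * (∑' n : ℕ, (n : ℝ) ^ (-σ₂)) * log N
          * ∑ m ∈ Icc 2 N, (m : ℝ) ^ (-(σ₁ + e)) := by
  set Z := ∑' n : ℕ, (n : ℝ) ^ (-σ₂)
  rw [mul_sum]
  refine sum_le_sum fun m hm => ?_
  obtain ⟨hm2, hmN⟩ := mem_Icc.1 hm
  have hlogN : log (m : ℝ) ≤ log N := log_le_log (by positivity) (by exact_mod_cast hmN)
  calc ∑ n ∈ Ico 1 m, _
      ≤ ∑ n ∈ Ico 1 m, 2 * 2 ^ |e| * log m * ((m : ℝ) ^ (-(σ₁ + e)) * (n : ℝ) ^ (-σ₂)) :=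
        sum_le_sum fun n hn => log_div_rpow_le hm2 (mem_Ico.1 hn).1 (mem_Ico.1 hn).2.le
    _ = 2 * 2 ^ |e| * log m * (m : ℝ) ^ (-(σ₁ + e)) * ∑ n ∈ Ico 1 m, (n : ℝ) ^ (-σ₂) := by
        rw [mul_sum]; simp only [mul_assoc]
    _ ≤ 2 * 2 ^ |e| * log m * (m : ℝ) ^ (-(σ₁ + e)) * Z := by
        gcongr; exact sum_Ico_one_rpow_neg_le_tsum hσ₂ m
    _ ≤ 2 * 2 ^ |e| * Z * log N * (m : ℝ) ^ (-(σ₁ + e)) := by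
        rw [mul_right_comm _ _ Z, mul_right_comm _ (log (m : ℝ))]
        gcongr

lemma sum_Icc_two_rpow_neg_le_integral {a : ℝ} (ha : 0 ≤ a) {N : ℕ} (hN : 1 ≤ N) :
    ∑ m ∈ Icc 2 N, (m : ℝ) ^ (-a) ≤ ∫ x in (1 : ℝ)..N, x ^ (-a) := by
  have hanti : AntitoneOn (fun x : ℝ => x ^ (-a)) (Set.Icc (1 : ℕ) N) := fun x hx y _ hxy =>
    rpow_le_rpow_of_nonpos (by linarith [hx.1, Nat.cast_one (R := ℝ)]) hxy (neg_nonpos.2 ha)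
  have := hanti.sum_le_integral_Ico hN
  rw [← Ico_add_one_right_eq_Icc, ← sum_Ico_add' (fun m : ℕ => (m : ℝ) ^ (-a)) 1 N 1]
  simpa using this

lemma sum_Icc_two_rpow_neg_le {a : ℝ} (ha₀ : 0 ≤ a) (ha₁ : a < 1) {N : ℕ} (hN : 1 ≤ N) :
    ∑ m ∈ Icc 2 N, (m : ℝ) ^ (-a) ≤ (N : ℝ) ^ (1 - a) / (1 - a) := by
  refine (sum_Icc_two_rpow_neg_le_integral ha₀ hN).trans ?_
  rw [integral_rpow (Or.inl (by linarith)), neg_add_eq_sub, one_rpow]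
  gcongr
  linarith

lemma sum_Icc_two_rpow_neg_one_le_log {N : ℕ} (hN : 1 ≤ N) :
    ∑ m ∈ Icc 2 N, (m : ℝ) ^ (-1 : ℝ) ≤ log N := by
  refine (sum_Icc_two_rpow_neg_le_integral zero_le_one hN).trans_eq ?_
  simp only [rpow_neg_one]
  rw [integral_inv_of_pos one_pos (by exact_mod_cast hN), div_one]

theorem log_weighted_double_sum_bound_general (σ₁ σ₂ σ₃ : ℝ)
    (h13 : 1 / 2 < σ₁ + σ₃) (h2 : 1 < σ₂) :
    (σ₁ + σ₃ < 1 → ∃ C > 0, ∀ T : ℝ, 2 ≤ T →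
      (∑ m₁ ∈ Finset.Icc 2 ⌊T⌋₊, ∑ n₁ ∈ Finset.Ico 1 m₁,
        Real.log ((m₁ + n₁ : ℕ) : ℝ) /
          ((m₁ : ℝ) ^ σ₁ * (n₁ : ℝ) ^ σ₂ * ((m₁ + n₁ : ℕ) : ℝ) ^ (σ₁ + 2 * σ₃ - 1)))
        ≤ C * T ^ (2 - 2 * σ₁ - 2 * σ₃) * Real.log T) ∧
    (σ₁ + σ₃ = 1 → ∃ C > 0, ∀ T : ℝ, 2 ≤ T →
      (∑ m₁ ∈ Finset.Icc 2 ⌊T⌋₊, ∑ n₁ ∈ Finset.Ico 1 m₁,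
        Real.log ((m₁ + n₁ : ℕ) : ℝ) /
          ((m₁ : ℝ) ^ σ₁ * (n₁ : ℝ) ^ σ₂ * ((m₁ + n₁ : ℕ) : ℝ) ^ (σ₁ + 2 * σ₃ - 1)))
        ≤ C * Real.log T ^ 2) := by
  set K := 2 * 2 ^ |σ₁ + 2 * σ₃ - 1| * ∑' n : ℕ, (n : ℝ) ^ (-σ₂)
  have hK : 0 < K := by
    have : (1 : ℝ) ≤ ∑' n : ℕ, (n : ℝ) ^ (-σ₂) := by
      simpa using sum_Ico_one_rpow_neg_le_tsum h2 2
    positivity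
  have hfloor {T : ℝ} (hT : 2 ≤ T) : 1 ≤ ⌊T⌋₊ ∧ (⌊T⌋₊ : ℝ) ≤ T ∧ log ⌊T⌋₊ ≤ log T := by
    have hN : 1 ≤ ⌊T⌋₊ := Nat.le_floor (by norm_num; linarith)
    have hNT : (⌊T⌋₊ : ℝ) ≤ T := Nat.floor_le (by linarith)
    exact ⟨hN, hNT, log_le_log (by exact_mod_cast hN) hNT⟩
  refine ⟨fun hlt => ⟨K / (2 - 2 * σ₁ - 2 * σ₃), by apply div_pos hK; linarith, fun T hT => ?_⟩,
    fun heq => ⟨K, hK, fun T hT => ?_⟩⟩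
  · obtain ⟨hN, hNT, hlogN⟩ := hfloor hT
    have hsum := sum_Icc_two_rpow_neg_le (a := σ₁ + (σ₁ + 2 * σ₃ - 1)) (by linarith)
      (by linarith) hN
    rw [show 1 - (σ₁ + (σ₁ + 2 * σ₃ - 1)) = 2 - 2 * σ₁ - 2 * σ₃ by ring] at hsum
    calc _ ≤ K * log ⌊T⌋₊ * ∑ m ∈ Icc 2 ⌊T⌋₊, (m : ℝ) ^ (-(σ₁ + (σ₁ + 2 * σ₃ - 1))) :=
          weighted_double_sum_le _ _ h2 _
      _ ≤ K * log T * (T ^ (2 - 2 * σ₁ - 2 * σ₃) / (2 - 2 * σ₁ - 2 * σ₃)) := by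
          gcongr
          · exact mul_nonneg hK.le (log_nonneg (by linarith))
          · exact hsum.trans (by gcongr <;> linarith)
      _ = _ := by ring
  · obtain ⟨hN, -, hlogN⟩ := hfloor hT
    have hsum := sum_Icc_two_rpow_neg_one_le_log hN
    rw [show (-1 : ℝ) = -(σ₁ + (σ₁ + 2 * σ₃ - 1)) by linarith] at hsum
    calc _ ≤ K * log ⌊T⌋₊ * ∑ m ∈ Icc 2 ⌊T⌋₊, (m : ℝ) ^ (-(σ₁ + (σ₁ + 2 * σ₃ - 1))) :=
          weighted_double_sum_le _ _ h2 _
      _ ≤ K * log T * log T := by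
          gcongr
          · exact mul_nonneg hK.le (log_nonneg (by linarith))
          · exact hsum.trans hlogN
      _ = K * log T ^ 2 := by ring

/-- For `σ₁ ≥ 0`, `σ₃ > 0`, `1/2 < σ₁+σ₃ ≤ 1`, `σ₂ > 1`:
`∑_{2 ≤ m₁ ≤ T} ∑_{n₁ < m₁} log(m₁+n₁) / (m₁^{σ₁} n₁^{σ₂} (m₁+n₁)^{σ₁+2σ₃-1})`
is `≪ T^{2-2σ₁-2σ₃} log T` when `σ₁+σ₃ < 1` and `≪ (log T)²` when `σ₁+σ₃ = 1`. -/
theorem log_weighted_double_sum_bound (σ₁ σ₂ σ₃ : ℝ) (h1 : 0 ≤ σ₁) (h3 : 0 < σ₃)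
    (h13 : 1 / 2 < σ₁ + σ₃) (h13' : σ₁ + σ₃ ≤ 1) (h2 : 1 < σ₂) :
    (σ₁ + σ₃ < 1 → ∃ C > 0, ∀ T : ℝ, 2 ≤ T →
      (∑ m₁ ∈ Finset.Icc 2 ⌊T⌋₊, ∑ n₁ ∈ Finset.Ico 1 m₁,
        Real.log ((m₁ + n₁ : ℕ) : ℝ) /
          ((m₁ : ℝ) ^ σ₁ * (n₁ : ℝ) ^ σ₂ * ((m₁ + n₁ : ℕ) : ℝ) ^ (σ₁ + 2 * σ₃ - 1)))
        ≤ C * T ^ (2 - 2 * σ₁ - 2 * σ₃) * Real.log T) ∧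
    (σ₁ + σ₃ = 1 → ∃ C > 0, ∀ T : ℝ, 2 ≤ T →
      (∑ m₁ ∈ Finset.Icc 2 ⌊T⌋₊, ∑ n₁ ∈ Finset.Ico 1 m₁,
        Real.log ((m₁ + n₁ : ℕ) : ℝ) /
          ((m₁ : ℝ) ^ σ₁ * (n₁ : ℝ) ^ σ₂ * ((m₁ + n₁ : ℕ) : ℝ) ^ (σ₁ + 2 * σ₃ - 1)))
        ≤ C * Real.log T ^ 2) :=
  log_weighted_double_sum_bound_general σ₁ σ₂ σ₃ h13 h2
end
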